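/- arXiv:1804.09155 — 8 statements merged into one kernel-verified Lean document; each statement's English description precedes it below -/
import Mathlib

section
/- Let G = (V,E) be a finite simple graph with unit-length edges, let s,t ∈ V, and let T = {v_1,…,v_p} ⊆ V∖{s,t} be a set of vertices all having the same neighborhood outside T, i.e. N_G(v_i)∖T = N_G(v_j)∖T for all i,j. Then for every edge subset S ⊆ E there exists an edge subset S' ⊆ E such that |S'| ≤ |S|, dist_{G−S'}(s,t) ≥ dist_{G−S}(s,t), and all vertices of T have the same neighborhood in the graph G[S'], i.e. N_{G[S']}(v_1) = N_{G[S']}(v_2) = … = N_{G[S']}(v_p). -/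
/-- **Twin-set rearrangement lemma.**
Let `G` be a finite simple graph with unit-length edges, `s t` vertices and
`T ⊆ V \ {s,t}` a set of vertices all having the same neighborhood outside `T`.
Then for every edge subset `S ⊆ E` there is an edge subset `S' ⊆ E` with
`|S'| ≤ |S|`, `dist_{G−S'}(s,t) ≥ dist_{G−S}(s,t)` (distance `+∞` when
disconnected, encoded via `edist`), and all vertices of `T` have the same
neighborhood in the graph `G[S']` whose edge set is exactly `S'`. -/
theorem stmt0 {V : Type*} [Fintype V] (G : SimpleGraph V) (s t : V) (T : Set V)
    (hsT : s ∉ T) (htT : t ∉ T)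
    (htwin : ∀ u ∈ T, ∀ v ∈ T, G.neighborSet u \ T = G.neighborSet v \ T)
    (S : Finset (Sym2 V)) (hS : ↑S ⊆ G.edgeSet) :
    ∃ S' : Finset (Sym2 V), ↑S' ⊆ G.edgeSet ∧ S'.card ≤ S.card ∧
      (G.deleteEdges ↑S).edist s t ≤ (G.deleteEdges ↑S').edist s t ∧
      ∀ u ∈ T, ∀ v ∈ T,
        (SimpleGraph.fromEdgeSet (↑S' : Set (Sym2 V))).neighborSet u =
        (SimpleGraph.fromEdgeSet (↑S' : Set (Sym2 V))).neighborSet v := by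
  classical
  rcases T.eq_empty_or_nonempty with hTe | ⟨v₁, hv₁⟩
  · exact ⟨S, hS, le_rfl, le_rfl, by simp [hTe]⟩
  -- T is nonempty
  set Tf : Finset V := Finset.univ.filter (· ∈ T) with hTfdef
  have hmemTf : ∀ x, x ∈ Tf ↔ x ∈ T := by intro x; simp [hTfdef]
  have hTfne : Tf.Nonempty := ⟨v₁, (hmemTf _).mpr hv₁⟩
  set Wf : V → Finset V := fun v => Finset.univ.filter (fun w => w ∉ T ∧ s(v, w) ∈ S)
    with hWfdef
  have hmemWf : ∀ v w, w ∈ Wf v ↔ w ∉ T ∧ s(v, w) ∈ S := by intro v w; simp [hWfdef]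
  obtain ⟨v₀, hv₀Tf, hv₀min⟩ := Tf.exists_min_image (fun v => (Wf v).card) hTfne
  have hv₀T : v₀ ∈ T := (hmemTf _).mp hv₀Tf
  set W : Finset V := Wf v₀ with hWdef
  set S₀ : Finset (Sym2 V) := S.filter (fun e => ∀ x ∈ e, x ∉ T) with hS₀def
  set X : Finset (Sym2 V) := (Tf ×ˢ W).image (fun p => s(p.1, p.2)) with hXdef
  set S' : Finset (Sym2 V) := S₀ ∪ X with hS'def
  -- twins have the same outside adjacency
  have htwinAdj : ∀ v ∈ T, ∀ w, w ∉ T → (G.Adj v w ↔ G.Adj v₀ w) := by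
    intro v hv w hw
    have h := htwin v hv v₀ hv₀T
    have h1 := Set.ext_iff.mp h w
    simp only [Set.mem_diff, SimpleGraph.mem_neighborSet] at h1
    constructor
    · intro ha; exact (h1.mp ⟨ha, hw⟩).1
    · intro ha; exact (h1.mpr ⟨ha, hw⟩).1
  have hWnotT : ∀ w ∈ W, w ∉ T := fun w hw => ((hmemWf v₀ w).mp hw).1
  have hWadj : ∀ v ∈ T, ∀ w ∈ W, G.Adj v w := by
    intro v hv w hw
    have h2 : s(v₀, w) ∈ G.edgeSet := hS ((hmemWf v₀ w).mp hw).2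
    rw [SimpleGraph.mem_edgeSet] at h2
    exact (htwinAdj v hv w (hWnotT w hw)).mpr h2
  -- membership characterization of X
  have hmemX : ∀ e, e ∈ X ↔ ∃ v ∈ T, ∃ w ∈ W, e = s(v, w) := by
    intro e
    simp only [hXdef, Finset.mem_image, Finset.mem_product, Prod.exists]
    constructor
    · rintro ⟨a, b, ⟨ha, hb⟩, rfl⟩; exact ⟨a, (hmemTf a).mp ha, b, hb, rfl⟩
    · rintro ⟨a, ha, b, hb, rfl⟩; exact ⟨a, b, ⟨(hmemTf a).mpr ha, hb⟩, rfl⟩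
  have hS'sub : (↑S' : Set (Sym2 V)) ⊆ G.edgeSet := by
    intro e he
    rw [Finset.mem_coe, hS'def, Finset.mem_union] at he
    rcases he with he | he
    · exact hS (Finset.mem_filter.mp he).1
    · obtain ⟨v, hv, w, hw, rfl⟩ := (hmemX e).mp he
      exact (hWadj v hv w hw)
  -- cardinality bound
  have hcard : S'.card ≤ S.card := by
    set crossE : V → Finset (Sym2 V) := fun v => (Wf v).image (fun w => s(v, w))
      with hcrossdef
    have hcrossCard : ∀ v ∈ Tf, (crossE v).card = (Wf v).card := by
      intro v hv
      apply Finset.card_image_of_injOn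
      intro w1 hw1 w2 hw2 heq
      rcases Sym2.eq_iff.mp heq with ⟨_, h⟩ | ⟨h1, h2⟩
      · exact h
      · exact absurd ((hmemTf v).mp hv) (h1 ▸ ((hmemWf v w2).mp hw2).1)
    have hcrossSubS : ∀ v, crossE v ⊆ S := by
      intro v e he
      obtain ⟨w, hw, rfl⟩ := Finset.mem_image.mp he
      exact ((hmemWf v w).mp hw).2
    have hdisjCross : ∀ u ∈ Tf, ∀ v ∈ Tf, u ≠ v → Disjoint (crossE u) (crossE v) := by
      intro u hu v hv huv
      rw [Finset.disjoint_left]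
      intro e heu hev
      obtain ⟨w1, hw1, he1⟩ := Finset.mem_image.mp heu
      obtain ⟨w2, hw2, he2⟩ := Finset.mem_image.mp hev
      rcases Sym2.eq_iff.mp (he1.trans he2.symm) with ⟨h1, _⟩ | ⟨h1, _⟩
      · exact huv h1
      · exact (((hmemWf v w2).mp hw2).1) (h1 ▸ (hmemTf u).mp hu)
    have hdisjS₀ : Disjoint S₀ (Tf.biUnion crossE) := by
      rw [Finset.disjoint_left]
      intro e he0 hec
      obtain ⟨v, hv, hev⟩ := Finset.mem_biUnion.mp hec
      obtain ⟨w, hw, rfl⟩ := Finset.mem_image.mp hev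
      exact ((Finset.mem_filter.mp he0).2 v (by simp)) ((hmemTf v).mp hv)
    have hsubS : S₀ ∪ Tf.biUnion crossE ⊆ S := by
      intro e he
      rcases Finset.mem_union.mp he with he | he
      · exact (Finset.mem_filter.mp he).1
      · obtain ⟨v, hv, hev⟩ := Finset.mem_biUnion.mp he
        exact hcrossSubS v hev
    have h1 : S'.card ≤ S₀.card + X.card := Finset.card_union_le _ _
    have h2 : X.card ≤ Tf.card * W.card := by
      calc X.card ≤ (Tf ×ˢ W).card := Finset.card_image_le
        _ = Tf.card * W.card := Finset.card_product _ _
    have h3 : Tf.card * W.card ≤ ∑ v ∈ Tf, (Wf v).card := by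
      have := Finset.sum_le_sum (fun v hv => hv₀min v hv)
      simpa [Finset.sum_const, mul_comm] using this
    have h4 : ∑ v ∈ Tf, (Wf v).card = (Tf.biUnion crossE).card := by
      rw [Finset.card_biUnion hdisjCross]
      exact (Finset.sum_congr rfl (fun v hv => (hcrossCard v hv).symm))
    have h5 : S₀.card + (Tf.biUnion crossE).card ≤ S.card := by
      rw [← Finset.card_union_of_disjoint hdisjS₀]
      exact Finset.card_le_card hsubS
    omega
  -- the distance bound
  have hdist : (G.deleteEdges ↑S).edist s t ≤ (G.deleteEdges ↑S').edist s t := by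
    by_cases htop : (G.deleteEdges ↑S').edist s t = ⊤
    · rw [htop]; exact le_top
    obtain ⟨p, hp⟩ := SimpleGraph.exists_walk_of_edist_ne_top htop
    set φ : V → V := fun x => if x ∈ T then v₀ else x with hφdef
    have hφT : ∀ x ∈ T, φ x = v₀ := by intro x hx; simp [hφdef, hx]
    have hφnT : ∀ x, x ∉ T → φ x = x := by intro x hx; simp [hφdef, hx]
    have hadj : ∀ a b, (G.deleteEdges ↑S').Adj a b → φ a ≠ φ b →
        (G.deleteEdges ↑S).Adj (φ a) (φ b) := by
      intro a b hab hne
      rw [SimpleGraph.deleteEdges_adj] at hab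
      obtain ⟨hGab, hnS'⟩ := hab
      rw [Finset.mem_coe] at hnS'
      rw [SimpleGraph.deleteEdges_adj]
      by_cases ha : a ∈ T <;> by_cases hb : b ∈ T
      · exact absurd ((hφT a ha).trans (hφT b hb).symm) hne
      · rw [hφT a ha, hφnT b hb]
        refine ⟨(htwinAdj a ha b hb).mp hGab, ?_⟩
        intro hmem
        rw [Finset.mem_coe] at hmem
        have hbW : b ∈ W := (hmemWf v₀ b).mpr ⟨hb, hmem⟩
        exact hnS' (Finset.mem_union_right _ ((hmemX _).mpr ⟨a, ha, b, hbW, rfl⟩))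
      · rw [hφT b hb, hφnT a ha]
        refine ⟨((htwinAdj b hb a ha).mp hGab.symm).symm, ?_⟩
        intro hmem
        rw [Finset.mem_coe] at hmem
        have haW : a ∈ W := (hmemWf v₀ a).mpr ⟨ha, by rwa [Sym2.eq_swap] at hmem⟩
        refine hnS' (Finset.mem_union_right _ ((hmemX _).mpr ⟨b, hb, a, haW, ?_⟩))
        rw [Sym2.eq_swap]
      · rw [hφnT a ha, hφnT b hb]
        refine ⟨hGab, ?_⟩
        intro hmem
        rw [Finset.mem_coe] at hmem
        refine hnS' (Finset.mem_union_left _ (Finset.mem_filter.mpr ⟨hmem, ?_⟩))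
        intro x hx
        rcases Sym2.mem_iff.mp hx with rfl | rfl <;> assumption
    have hwalk : ∀ (a b : V) (w : (G.deleteEdges (↑S' : Set (Sym2 V))).Walk a b),
        ∃ q : (G.deleteEdges (↑S : Set (Sym2 V))).Walk (φ a) (φ b), q.length ≤ w.length := by
      intro a b w
      induction w with
      | nil => exact ⟨SimpleGraph.Walk.nil, by simp⟩
      | @cons x y z h w ih =>
        obtain ⟨q, hq⟩ := ih
        by_cases hxy : φ x = φ y
        · exact ⟨q.copy hxy.symm rfl, by
            rw [SimpleGraph.Walk.length_copy, SimpleGraph.Walk.length_cons]; omega⟩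
        · exact ⟨SimpleGraph.Walk.cons (hadj x y h hxy) q, by
            rw [SimpleGraph.Walk.length_cons, SimpleGraph.Walk.length_cons]; omega⟩
    obtain ⟨q, hq⟩ := hwalk s t p
    have hq' : (G.deleteEdges (↑S : Set (Sym2 V))).edist s t ≤ q.length := by
      have := SimpleGraph.edist_le (q.copy (hφnT s hsT) (hφnT t htT))
      rwa [SimpleGraph.Walk.length_copy] at this
    calc (G.deleteEdges (↑S : Set (Sym2 V))).edist s t ≤ (q.length : ℕ∞) := hq'
      _ ≤ (p.length : ℕ∞) := by exact_mod_cast hq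
      _ = (G.deleteEdges (↑S' : Set (Sym2 V))).edist s t := hp
  -- the twin condition
  have hnbhd : ∀ u ∈ T,
      (SimpleGraph.fromEdgeSet (↑S' : Set (Sym2 V))).neighborSet u = ↑W := by
    intro u hu
    ext y
    simp only [SimpleGraph.mem_neighborSet, SimpleGraph.fromEdgeSet_adj, Finset.mem_coe]
    constructor
    · rintro ⟨hmem, hne⟩
      rcases Finset.mem_union.mp hmem with hmem | hmem
      · exact absurd hu ((Finset.mem_filter.mp hmem).2 u (by simp))
      · obtain ⟨v, hv, w, hw, heq⟩ := (hmemX _).mp hmem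
        rcases Sym2.eq_iff.mp heq with ⟨_, rfl⟩ | ⟨h1, _⟩
        · exact hw
        · exact absurd hu (h1 ▸ hWnotT w hw)
    · intro hy
      refine ⟨Finset.mem_union_right _ ((hmemX _).mpr ⟨u, hu, y, hy, rfl⟩), ?_⟩
      rintro rfl
      exact hWnotT u hy hu
  exact ⟨S', hS'sub, hcard, hdist, fun u hu v hv => (hnbhd u hu).trans (hnbhd v hv).symm⟩
end

section
/- Let G = (V,E) be a finite simple graph with positive integer edge lengths τ, let s,t ∈ V, and let v ∈ V∖{s,t} be a vertex of degree exactly two with neighbors u and w such that {u,w} ∉ E. Let G' be the graph obtained from G by deleting v and adding the edge {u,w}, with edge lengths τ' given by τ'({u,w}) = τ({u,v}) + τ({v,w}) and τ'(e) = τ(e) for every other edge e. Then for all k,ℓ ∈ ℕ: there exists S ⊆ E with |S| ≤ k and dist^τ_{G−S}(s,t) ≥ ℓ if and only if there exists S' ⊆ E(G') with |S'| ≤ k and dist^{τ'}_{G'−S'}(s,t) ≥ ℓ. -/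
/-- The minimum `τ`-length of an `st`-path in `G` (equivalently, the infimum of
the `τ`-lengths of all `st`-walks, since lengths are nonnegative), interpreted
as `+∞` when `s` and `t` are disconnected. -/
noncomputable def wdist {V : Type*} (G : SimpleGraph V) (τ : Sym2 V → ℕ)
    (a b : V) : ℕ∞ :=
  ⨅ p : G.Walk a b, ((p.edges.map τ).sum : ℕ∞)

open SimpleGraph in
/-- Any walk in `H'` whose individual edges can be replaced by walks in `H` of
equal `τ`-length lifts to a walk in `H` of equal length. -/
lemma lift_walk_aux {V V' : Type*} {H : SimpleGraph V} {H' : SimpleGraph V'} (f : V' → V)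
    (τ : Sym2 V → ℕ) (τ' : Sym2 V' → ℕ)
    (hadj : ∀ a b : V', H'.Adj a b →
      ∃ q : H.Walk (f a) (f b), (q.edges.map τ).sum = τ' s(a, b)) :
    ∀ {a b : V'} (p : H'.Walk a b),
      ∃ q : H.Walk (f a) (f b), (q.edges.map τ).sum = (p.edges.map τ').sum := by
  intro a b p
  induction p with
  | nil => exact ⟨.nil, rfl⟩
  | cons h p ih =>
    obtain ⟨q₁, hq₁⟩ := hadj _ _ h
    obtain ⟨q₂, hq₂⟩ := ih
    exact ⟨q₁.append q₂, by simp [Walk.edges_append, hq₁, hq₂]⟩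

open SimpleGraph in
/-- Any walk in `H` (where `v` has its only possible neighbors among `{u, w}`)
projects to a walk in the reduced graph `H'` of at most the same length. -/
lemma project_walk_aux {V : Type*} {v u w t : V} {H : SimpleGraph V}
    {H' : SimpleGraph ({x : V | x ≠ v} : Set V)}
    (τ : Sym2 V → ℕ) (τ' : Sym2 ({x : V | x ≠ v} : Set V) → ℕ)
    (huv : u ≠ v) (hwv : w ≠ v)
    (hτ1 : τ' s(⟨u, huv⟩, ⟨w, hwv⟩) = τ s(u, v) + τ s(v, w))
    (hτ2 : ∀ e, e ≠ s(⟨u, huv⟩, ⟨w, hwv⟩) → τ' e = τ (e.map Subtype.val))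
    (h1 : ∀ a b : ({x : V | x ≠ v} : Set V), H.Adj ↑a ↑b → H'.Adj a b)
    (hadj2 : H.Adj u v → H'.Adj ⟨u, huv⟩ ⟨w, hwv⟩)
    (hnbr : ∀ x, H.Adj v x → x = u ∨ x = w)
    (hHuw : ¬ H.Adj u w) (htv : t ≠ v) :
    ∀ (n : ℕ) (a : V) (ha : a ≠ v) (p : H.Walk a t), p.length ≤ n →
      ∃ q : H'.Walk ⟨a, ha⟩ ⟨t, htv⟩, (q.edges.map τ').sum ≤ (p.edges.map τ).sum := by
  have key : ∀ (a b : V) (ha : a ≠ v) (hb : b ≠ v), H.Adj a b →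
      τ' s(⟨a, ha⟩, ⟨b, hb⟩) = τ s(a, b) := by
    intro a b ha hb hab
    have hne : s((⟨a, ha⟩ : ({x : V | x ≠ v} : Set V)), ⟨b, hb⟩) ≠ s(⟨u, huv⟩, ⟨w, hwv⟩) := by
      intro hcon
      rw [Sym2.eq_iff] at hcon
      rcases hcon with ⟨h₁, h₂⟩ | ⟨h₁, h₂⟩ <;>
        simp only [Subtype.mk.injEq] at h₁ h₂ <;> subst h₁ <;> subst h₂
      · exact hHuw hab
      · exact hHuw hab.symm
    rw [hτ2 _ hne, Sym2.map_pair_eq]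
  intro n
  induction n with
  | zero =>
    intro a ha p hlen
    cases p with
    | nil => exact ⟨.nil, by simp⟩
    | cons h p' => simp at hlen
  | succ n ih =>
    intro a ha p hlen
    cases p with
    | nil => exact ⟨.nil, by simp⟩
    | cons h p' =>
      rename_i b
      by_cases hb : v = b
      · subst hb
        cases p' with
        | nil => exact absurd rfl htv
        | cons he2 p'' =>
          rename_i c
          have hc : c ≠ v := he2.ne'
          simp only [Walk.length_cons] at hlen
          obtain ⟨q'', hq''⟩ := ih c hc p'' (by omega)
          by_cases hac : a = c
          · subst hac
            refine ⟨q'', hq''.trans ?_⟩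
            simp only [Walk.edges_cons, List.map_cons, List.sum_cons]
            omega
          · rcases (hnbr a h.symm).imp Eq.symm Eq.symm with rfl | rfl <;>
              rcases (hnbr c he2).imp Eq.symm Eq.symm with rfl | rfl
            · exact absurd rfl hac
            · refine ⟨Walk.cons (hadj2 h) q'', ?_⟩
              simp only [Walk.edges_cons, List.map_cons, List.sum_cons, hτ1]
              omega
            · refine ⟨Walk.cons (hadj2 he2.symm).symm q'', ?_⟩
              simp only [Walk.edges_cons, List.map_cons, List.sum_cons]
              have e1 : s((⟨w, hwv⟩ : ({x : V | x ≠ v} : Set V)), ⟨u, huv⟩)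
                  = s(⟨u, huv⟩, ⟨w, hwv⟩) := Sym2.eq_swap
              rw [e1, hτ1]
              have e2 : s(w, v) = s(v, w) := Sym2.eq_swap
              have e3 : s(v, u) = s(u, v) := Sym2.eq_swap
              rw [e2, e3]
              omega
            · exact absurd rfl hac
      · have hb' : b ≠ v := fun hh => hb hh.symm
        simp only [Walk.length_cons] at hlen
        obtain ⟨q', hq'⟩ := ih b hb' p' (by omega)
        refine ⟨Walk.cons (h1 ⟨a, ha⟩ ⟨b, hb'⟩ h) q', ?_⟩
        simp only [Walk.edges_cons, List.map_cons, List.sum_cons, key a b ha hb' h]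
        omega

open SimpleGraph in
/-- **Correctness of the degree-two data reduction rule (general lengths).**
Let `G` be a finite simple graph with positive integer edge lengths `τ`,
`s t` vertices and `v ∉ {s,t}` a vertex of degree exactly two with neighbors
`u` and `w`, where `{u,w} ∉ E`. Let `G'` be obtained from `G` by deleting `v`
and adding the edge `{u,w}`, with lengths `τ'({u,w}) = τ({u,v}) + τ({v,w})`
and `τ'(e) = τ(e)` for every other edge. Then for all `k, ℓ ∈ ℕ`: there is
`S ⊆ E(G)` with `|S| ≤ k` and `dist^τ_{G−S}(s,t) ≥ ℓ` iff there is
`S' ⊆ E(G')` with `|S'| ≤ k` and `dist^{τ'}_{G'−S'}(s,t) ≥ ℓ`. -/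
theorem stmt4 {V : Type*} [Fintype V] [DecidableEq V] (G : SimpleGraph V)
    [DecidableRel G.Adj] (τ : Sym2 V → ℕ) (hpos : ∀ e ∈ G.edgeSet, 0 < τ e)
    (s t v u w : V) (hvs : v ≠ s) (hvt : v ≠ t)
    (hdeg : G.degree v = 2) (hvu : G.Adj v u) (hvw : G.Adj v w) (huw : u ≠ w)
    (hnadj : ¬ G.Adj u w) (huv : u ≠ v) (hwv : w ≠ v) (k ℓ : ℕ) :
    (∃ S : Finset (Sym2 V), ↑S ⊆ G.edgeSet ∧ S.card ≤ k ∧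
        (ℓ : ℕ∞) ≤ wdist (G.deleteEdges ↑S) τ s t) ↔
    (∃ S' : Finset (Sym2 ({x : V | x ≠ v} : Set V)),
        ↑S' ⊆ ((G.induce {x : V | x ≠ v}) ⊔
          SimpleGraph.fromEdgeSet {s(⟨u, huv⟩, ⟨w, hwv⟩)}).edgeSet ∧
        S'.card ≤ k ∧
        (ℓ : ℕ∞) ≤ wdist
          (((G.induce {x : V | x ≠ v}) ⊔
            SimpleGraph.fromEdgeSet {s(⟨u, huv⟩, ⟨w, hwv⟩)}).deleteEdges ↑S')
          (fun e => if e = s(⟨u, huv⟩, ⟨w, hwv⟩) then τ s(u, v) + τ s(v, w)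
            else τ (e.map Subtype.val))
          ⟨s, hvs.symm⟩ ⟨t, hvt.symm⟩) := by
  classical
  have huw' : (⟨u, huv⟩ : ({x : V | x ≠ v} : Set V)) ≠ ⟨w, hwv⟩ :=
    fun hc => huw (congrArg Subtype.val hc)
  -- the neighbors of `v` are exactly `u` and `w`
  have hnb : ∀ x, G.Adj v x → x = u ∨ x = w := by
    have hset : G.neighborFinset v = {u, w} := by
      refine (Finset.eq_of_subset_of_card_le ?_ ?_).symm
      · intro x hx
        simp only [Finset.mem_insert, Finset.mem_singleton] at hx
        rcases hx with rfl | rfl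
        · exact (mem_neighborFinset _ _ _).2 hvu
        · exact (mem_neighborFinset _ _ _).2 hvw
      · have : ({u, w} : Finset V).card = 2 := by
          rw [Finset.card_insert_of_notMem (by simpa using huw), Finset.card_singleton]
        rw [this]
        exact le_of_eq hdeg
    intro x hx
    have : x ∈ G.neighborFinset v := (mem_neighborFinset _ _ _).2 hx
    rw [hset] at this
    simpa using this
  -- the only edges incident to `v` are `{u,v}` and `{v,w}`
  have hinc : ∀ e ∈ G.edgeSet, v ∈ e → e = s(u, v) ∨ e = s(v, w) := by
    intro e
    induction e using Sym2.ind with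
    | _ x y =>
      intro he hv
      rcases Sym2.mem_iff.1 hv with rfl | rfl
      · rcases hnb y ((mem_edgeSet _).1 he) with rfl | rfl
        · exact Or.inl Sym2.eq_swap
        · exact Or.inr rfl
      · rcases hnb x ((mem_edgeSet _).1 he).symm with rfl | rfl
        · exact Or.inl rfl
        · exact Or.inr Sym2.eq_swap
  set V' : Set V := {x : V | x ≠ v} with hV'
  set G' : SimpleGraph V' := (G.induce {x : V | x ≠ v}) ⊔
    SimpleGraph.fromEdgeSet {s(⟨u, huv⟩, ⟨w, hwv⟩)} with hG'
  set τ' : Sym2 V' → ℕ := fun e => if e = s(⟨u, huv⟩, ⟨w, hwv⟩) then τ s(u, v) + τ s(v, w)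
            else τ (e.map Subtype.val) with hτ'
  have hτ1 : τ' s(⟨u, huv⟩, ⟨w, hwv⟩) = τ s(u, v) + τ s(v, w) := if_pos rfl
  have hτ2 : ∀ e, e ≠ s(⟨u, huv⟩, ⟨w, hwv⟩) → τ' e = τ (e.map Subtype.val) :=
    fun e h => if_neg h
  constructor
  · -- forward direction
    set π : V → V' := fun x => if h : x = v then ⟨u, huv⟩ else ⟨x, h⟩ with hπdef
    have hπ : ∀ (x : V) (hx : x ≠ v), π x = ⟨x, hx⟩ := fun x hx => dif_neg hx
    have hπc : ∀ (a : V'), π ↑a = a := fun a => by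
      rw [hπ ↑a a.2]
    set g : Sym2 V → Sym2 V' :=
      fun e => if e = s(u, v) ∨ e = s(v, w) then s(⟨u, huv⟩, ⟨w, hwv⟩) else e.map π with hg
    have hnotuv : ∀ (x y : V), x ≠ v → y ≠ v → ¬(s(x, y) = s(u, v) ∨ s(x, y) = s(v, w)) := by
      intro x y hx hy hcon
      have hv : v ∈ s(x, y) := by
        rcases hcon with h | h <;> rw [h] <;> simp
      rcases Sym2.mem_iff.1 hv with h | h
      · exact hx h.symm
      · exact hy h.symm
    have hgproj : ∀ (a b : V'), g s(↑a, ↑b) = s(a, b) := by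
      intro a b
      rw [hg]
      simp only [if_neg (hnotuv ↑a ↑b a.2 b.2), Sym2.map_pair_eq, hπc]
    rintro ⟨S, hSsub, hScard, hSd⟩
    refine ⟨S.image g, ?_, le_trans (Finset.card_image_le) hScard, ?_⟩
    · intro e he
      simp only [Finset.coe_image, Set.mem_image, Finset.mem_coe] at he
      obtain ⟨e₀, he₀S, rfl⟩ := he
      have he₀G := hSsub he₀S
      by_cases hcase : e₀ = s(u, v) ∨ e₀ = s(v, w)
      · rw [hg]
        simp only [if_pos hcase]
        rw [mem_edgeSet, hG']
        exact (sup_adj _ _ _ _).2 (Or.inr ((fromEdgeSet_adj _).2 ⟨rfl, huw'⟩))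
      · have hv : v ∉ e₀ := fun hv => hcase (hinc e₀ he₀G hv)
        revert he₀G hv hcase
        induction e₀ using Sym2.ind with
        | _ x y =>
          intro he₀G hcase hv
          have hx : x ≠ v := fun h => hv (h ▸ Sym2.mem_mk_left x y)
          have hy : y ≠ v := fun h => hv (h ▸ Sym2.mem_mk_right x y)
          rw [hg]
          simp only [if_neg hcase, Sym2.map_pair_eq, hπ x hx, hπ y hy]
          rw [mem_edgeSet, hG']
          refine (sup_adj _ _ _ _).2 (Or.inl ?_)
          simp only [comap_adj, Function.Embedding.coe_subtype]
          exact (mem_edgeSet _).1 he₀G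
    · rw [wdist, le_iInf_iff]
      intro p
      have hadj : ∀ a b : V', ((G'.deleteEdges ↑(S.image g)).Adj a b) →
          ∃ q : (G.deleteEdges (↑S : Set (Sym2 V))).Walk (↑a) (↑b),
            (q.edges.map τ).sum = τ' s(a, b) := by
        intro a b hab
        rw [deleteEdges_adj] at hab
        obtain ⟨hGab, hnotS'⟩ := hab
        rw [hG', sup_adj] at hGab
        rcases hGab with hind | hfe
        · have hGab : G.Adj ↑a ↑b := by
            simpa using hind
          have hne : s(a, b) ≠ s((⟨u, huv⟩ : V'), ⟨w, hwv⟩) := by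
            intro hcon
            rw [Sym2.eq_iff] at hcon
            rcases hcon with ⟨h₁, h₂⟩ | ⟨h₁, h₂⟩ <;> rw [h₁, h₂] at hGab
            · exact hnadj hGab
            · exact hnadj hGab.symm
          have hmem : s((a : V), ↑b) ∉ (↑S : Set (Sym2 V)) := by
            intro hmem
            exact hnotS' (Finset.mem_coe.2 (Finset.mem_image.2 ⟨_, Finset.mem_coe.1 hmem,
              hgproj a b⟩))
          refine ⟨Walk.cons (deleteEdges_adj.2 ⟨hGab, hmem⟩) .nil, ?_⟩
          simp [hτ2 _ hne, Sym2.map_pair_eq]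
        · have hab_eq : s(a, b) = s((⟨u, huv⟩ : V'), ⟨w, hwv⟩) := by
            simpa using hfe.1
          have huvS : s(u, v) ∉ (↑S : Set (Sym2 V)) := by
            intro hmem
            refine hnotS' ?_
            rw [hab_eq]
            exact Finset.mem_coe.2 (Finset.mem_image.2 ⟨_, Finset.mem_coe.1 hmem,
              if_pos (Or.inl rfl)⟩)
          have hvwS : s(v, w) ∉ (↑S : Set (Sym2 V)) := by
            intro hmem
            refine hnotS' ?_
            rw [hab_eq]
            exact Finset.mem_coe.2 (Finset.mem_image.2 ⟨_, Finset.mem_coe.1 hmem,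
              if_pos (Or.inr rfl)⟩)
          have hd1 : (G.deleteEdges (↑S : Set (Sym2 V))).Adj u v :=
            deleteEdges_adj.2 ⟨hvu.symm, huvS⟩
          have hd2 : (G.deleteEdges (↑S : Set (Sym2 V))).Adj v w :=
            deleteEdges_adj.2 ⟨hvw, hvwS⟩
          rcases Sym2.eq_iff.1 hab_eq with ⟨rfl, rfl⟩ | ⟨rfl, rfl⟩
          · refine ⟨Walk.cons hd1 (Walk.cons hd2 .nil), ?_⟩
            rw [hab_eq, hτ1]
            simp
          · refine ⟨Walk.cons hd2.symm (Walk.cons hd1.symm .nil), ?_⟩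
            rw [hab_eq, hτ1]
            simp only [Walk.edges_cons, Walk.edges_nil, List.map_cons, List.map_nil,
              List.sum_cons, List.sum_nil]
            have e2 : s(w, v) = s(v, w) := Sym2.eq_swap
            have e3 : s(v, u) = s(u, v) := Sym2.eq_swap
            rw [e2, e3]
            omega
      obtain ⟨q, hq⟩ := lift_walk_aux Subtype.val τ τ' hadj p
      calc (ℓ : ℕ∞) ≤ wdist (G.deleteEdges ↑S) τ s t := hSd
        _ ≤ ((q.edges.map τ).sum : ℕ∞) := iInf_le _ q
        _ = ((p.edges.map τ').sum : ℕ∞) := Nat.cast_inj.mpr hq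
  · -- backward direction
    set g' : Sym2 V' → Sym2 V :=
      fun e => if e = s(⟨u, huv⟩, ⟨w, hwv⟩) then s(u, v) else e.map Subtype.val with hg'
    have hG'edge : ∀ (a b : V'), G'.Adj a b →
        s(a, b) = s((⟨u, huv⟩ : V'), ⟨w, hwv⟩) ∨ G.Adj ↑a ↑b := by
      intro a b hab
      rw [hG', sup_adj] at hab
      rcases hab with hind | hfe
      · exact Or.inr (by simpa using hind)
      · exact Or.inl (by simpa using hfe.1)
    rintro ⟨S', hS'sub, hS'card, hS'd⟩
    refine ⟨S'.image g', ?_, le_trans (Finset.card_image_le) hS'card, ?_⟩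
    · intro e he
      simp only [Finset.coe_image, Set.mem_image, Finset.mem_coe] at he
      obtain ⟨e₀, he₀S, rfl⟩ := he
      have he₀G := hS'sub (Finset.mem_coe.2 he₀S)
      by_cases hcase : e₀ = s((⟨u, huv⟩ : V'), ⟨w, hwv⟩)
      · rw [hg']
        simp only [if_pos hcase]
        exact (mem_edgeSet _).2 hvu.symm
      · rw [hg']
        simp only [if_neg hcase]
        revert he₀G hcase
        induction e₀ using Sym2.ind with
        | _ a b =>
          intro he₀G hcase
          rcases hG'edge a b ((mem_edgeSet _).1 he₀G) with heq | hadj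
          · exact absurd heq hcase
          · rw [Sym2.map_pair_eq]
            exact (mem_edgeSet _).2 hadj
    · rw [wdist, le_iInf_iff]
      intro p
      have hHle : ∀ {a b : V}, (G.deleteEdges ↑(S'.image g')).Adj a b → G.Adj a b :=
        fun h => (deleteEdges_adj.1 h).1
      have h1 : ∀ a b : V', (G.deleteEdges ↑(S'.image g')).Adj ↑a ↑b →
          (G'.deleteEdges ↑S').Adj a b := by
        intro a b hab
        rw [deleteEdges_adj] at hab
        obtain ⟨hGab, hnS⟩ := hab
        rw [deleteEdges_adj]
        constructor
        · rw [hG', sup_adj]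
          left
          simpa using hGab
        · intro hmem
          refine hnS ?_
          have hne : s(a, b) ≠ s((⟨u, huv⟩ : V'), ⟨w, hwv⟩) := by
            intro hcon
            rw [Sym2.eq_iff] at hcon
            rcases hcon with ⟨h₁, h₂⟩ | ⟨h₁, h₂⟩ <;> rw [h₁, h₂] at hGab <;>
              simp only [] at hGab
            · exact hnadj hGab
            · exact hnadj hGab.symm
          have : g' s(a, b) = s((a : V), ↑b) := by
            rw [hg']
            simp only [if_neg hne, Sym2.map_pair_eq]
          exact this ▸ Finset.mem_coe.2 (Finset.mem_image.2 ⟨_, Finset.mem_coe.1 hmem, rfl⟩)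
      have h2 : (G.deleteEdges ↑(S'.image g')).Adj u v →
          (G'.deleteEdges ↑S').Adj ⟨u, huv⟩ ⟨w, hwv⟩ := by
        intro hadj
        rw [deleteEdges_adj] at hadj ⊢
        constructor
        · rw [hG', sup_adj]
          exact Or.inr ((fromEdgeSet_adj _).2 ⟨rfl, huw'⟩)
        · intro hmem
          refine hadj.2 ?_
          have : g' s((⟨u, huv⟩ : V'), ⟨w, hwv⟩) = s(u, v) := by
            rw [hg']; simp
          exact this ▸ Finset.mem_coe.2 (Finset.mem_image.2 ⟨_, Finset.mem_coe.1 hmem, rfl⟩)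
      have hnbr : ∀ x, (G.deleteEdges ↑(S'.image g')).Adj v x → x = u ∨ x = w :=
        fun x hx => hnb x (hHle hx)
      have hHuw : ¬ (G.deleteEdges ↑(S'.image g')).Adj u w := fun h => hnadj (hHle h)
      obtain ⟨q, hq⟩ := project_walk_aux τ τ' huv hwv hτ1 hτ2 h1 h2 hnbr hHuw
        (fun h => hvt h.symm) p.length s (fun h => hvs h.symm) p le_rfl
      calc (ℓ : ℕ∞) ≤ wdist (G'.deleteEdges ↑S') τ' ⟨s, hvs.symm⟩ ⟨t, hvt.symm⟩ := hS'd
        _ ≤ ((q.edges.map τ').sum : ℕ∞) := iInf_le _ q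
        _ ≤ ((p.edges.map τ).sum : ℕ∞) := Nat.cast_le.mpr hq
end

section
/- Let G_1 = (V_1,E_1) and G_2 = (V_2,E_2) be finite simple graphs with positive integer edge lengths whose vertex sets satisfy V_1 ∩ V_2 = {u}, let s ∈ V_1∖{u} and t ∈ V_2∖{u}, and let G = (V_1 ∪ V_2, E_1 ∪ E_2) be their union (the serial composition of G_1 and G_2 at u). Then for every x ∈ ℕ: c_{s,t}(G,x) = min over x' ∈ {0,1,…,x} of ( c_{s,u}(G_1,x') + c_{u,t}(G_2,x−x') ). -/
/-- `cutCost G τ a b x` is the minimum cardinality of an edge set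
`S ⊆ E(G)` such that `dist^τ_{G−S}(a,b) ≥ x` (this minimum exists since
deleting all edges yields distance `+∞`). -/
noncomputable def cutCost {V : Type*} (G : SimpleGraph V) (τ : Sym2 V → ℕ)
    (a b : V) (x : ℕ) : ℕ :=
  sInf {c : ℕ | ∃ S : Finset (Sym2 V), ↑S ⊆ G.edgeSet ∧ S.card = c ∧
    (x : ℕ∞) ≤ wdist (G.deleteEdges ↑S) τ a b}

/-!
Every walk from `V₁` to `t` in `H₁ ⊔ H₂` enters `V₂` through the cut vertex `u`, so the series
distance is additive: `dist_{H₁ ⊔ H₂}(s, t) = dist_{H₁}(s, u) + dist_{H₂}(u, t)`. The edge sets of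
`G₁` and `G₂` are disjoint, so an edge set `S` deleted from `G₁ ⊔ G₂` splits into `S ∩ E₁` and
`S ∩ E₂` of total size `|S|`, and `x ≤ d₁ + d₂` splits as `x' ≤ d₁`, `x - x' ≤ d₂` with
`x' = min x d₁`. Conversely, the union of optimal cuts for `x'` in `G₁` and `x - x'` in `G₂` is
a cut for `x` in `G₁ ⊔ G₂`.
-/

open SimpleGraph

lemma ENat.exists_le_and_sub_le_of_le_add {x : ℕ} {d₁ d₂ : ℕ∞} (h : (x : ℕ∞) ≤ d₁ + d₂) :
    ∃ y ≤ x, (y : ℕ∞) ≤ d₁ ∧ ((x - y : ℕ) : ℕ∞) ≤ d₂ := by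
  induction d₁ using ENat.recTopCoe with
  | top => exact ⟨x, le_rfl, le_top, by simp⟩
  | coe n =>
    refine ⟨min x n, min_le_left _ _, by exact_mod_cast min_le_right _ _, ?_⟩
    induction d₂ using ENat.recTopCoe with
    | top => exact le_top
    | coe m =>
      norm_cast at h ⊢
      omega

section

variable {V : Type*} {G H : SimpleGraph V} (τ : Sym2 V → ℕ)

lemma wdist_le_walk {a b : V} (p : G.Walk a b) : wdist G τ a b ≤ ((p.edges.map τ).sum : ℕ∞) :=
  iInf_le _ p

lemma wdist_self (a : V) : wdist G τ a a = 0 :=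
  nonpos_iff_eq_zero.mp (by simpa using wdist_le_walk τ (Walk.nil : G.Walk a a))

lemma wdist_le_of_adj {a b : V} (h : G.Adj a b) : wdist G τ a b ≤ τ s(a, b) := by
  simpa using wdist_le_walk τ h.toWalk

lemma wdist_eq_top_of_not_reachable {a b : V} (h : ¬G.Reachable a b) : wdist G τ a b = ⊤ := by
  have := not_reachable_iff_isEmpty_walk.mp h
  simp [wdist]

lemma wdist_triangle (a b c : V) : wdist G τ a c ≤ wdist G τ a b + wdist G τ b c :=
  ENat.le_iInf_add_iInf fun p q =>
    (wdist_le_walk τ (p.append q)).trans_eq (by simp [Walk.edges_append])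

lemma wdist_anti (h : G ≤ H) (a b : V) : wdist H τ a b ≤ wdist G τ a b :=
  le_iInf fun p => (wdist_le_walk τ (p.mapLe h)).trans_eq (by rw [Walk.edges_mapLe_eq_edges])

lemma le_wdist_of_potential (φ : V → ℕ∞) (hφ : ∀ v w, G.Adj v w → φ v ≤ τ s(v, w) + φ w)
    {b : V} (hb : φ b = 0) (a : V) : φ a ≤ wdist G τ a b := by
  refine le_iInf fun p => ?_
  induction p with
  | nil => simp [hb]
  | cons h q ih =>
    rw [Walk.edges_cons, List.map_cons, List.sum_cons, Nat.cast_add]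
    exact (hφ _ _ h).trans (add_le_add_right (ih hb) _)

lemma wdist_sup_eq_add {H₁ H₂ : SimpleGraph V} {V₁ V₂ : Set V} {u s t : V}
    (hV : V₁ ∩ V₂ = {u}) (hH₁ : ∀ a b, H₁.Adj a b → a ∈ V₁ ∧ b ∈ V₁)
    (hH₂ : ∀ a b, H₂.Adj a b → a ∈ V₂ ∧ b ∈ V₂) (hs : s ∈ V₁) (ht : t ∈ V₂) :
    wdist (H₁ ⊔ H₂) τ s t = wdist H₁ τ s u + wdist H₂ τ u t := by
  refine le_antisymm ((wdist_triangle τ s u t).trans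
    (add_le_add (wdist_anti τ le_sup_left s u) (wdist_anti τ le_sup_right u t))) ?_
  classical
  -- Distance to `t` on the `H₂` side, distance to `t` through `u` on the `H₁` side; the two
  -- readings agree at `u`, so `φ` drops by at most `τ e` along every edge `e`.
  let φ : V → ℕ∞ := fun a => if a ∈ V₂ then wdist H₂ τ a t else wdist H₁ τ a u + wdist H₂ τ u t
  have φ_of_mem : ∀ a ∈ V₁, φ a = wdist H₁ τ a u + wdist H₂ τ u t := by
    intro a ha
    by_cases ha₂ : a ∈ V₂
    · obtain rfl : a = u := hV.subset ⟨ha, ha₂⟩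
      simp [φ, ha₂, wdist_self]
    · simp [φ, ha₂]
  rw [← φ_of_mem s hs]
  refine le_wdist_of_potential τ φ (fun a b hab => ?_) (by simp [φ, ht, wdist_self]) s
  rcases hab with h | h
  · rw [φ_of_mem a (hH₁ a b h).1, φ_of_mem b (hH₁ a b h).2, ← add_assoc]
    exact add_le_add_left
      ((wdist_triangle τ a b u).trans (add_le_add_left (wdist_le_of_adj τ h) _)) _
  · simp only [φ, (hH₂ a b h).1, (hH₂ a b h).2, if_true]
    exact (wdist_triangle τ a b t).trans (add_le_add_left (wdist_le_of_adj τ h) _)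

lemma disjoint_edgeSet_of_inter_eq_singleton {G₁ G₂ : SimpleGraph V} {V₁ V₂ : Set V} {u : V}
    (hV : V₁ ∩ V₂ = {u}) (hG₁ : ∀ a b, G₁.Adj a b → a ∈ V₁ ∧ b ∈ V₁)
    (hG₂ : ∀ a b, G₂.Adj a b → a ∈ V₂ ∧ b ∈ V₂) : Disjoint G₁.edgeSet G₂.edgeSet := by
  refine Set.disjoint_left.mpr fun e he₁ he₂ => ?_
  induction e using Sym2.ind with
  | _ a b =>
    have ha : a = u := hV.subset ⟨(hG₁ a b he₁).1, (hG₂ a b he₂).1⟩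
    have hb : b = u := hV.subset ⟨(hG₁ a b he₁).2, (hG₂ a b he₂).2⟩
    exact ((mem_edgeSet G₁).mp he₁).ne (ha.trans hb.symm)

lemma cutCost_le {a b : V} {S : Finset (Sym2 V)} (hS : ↑S ⊆ G.edgeSet) {x : ℕ}
    (hx : (x : ℕ∞) ≤ wdist (G.deleteEdges ↑S) τ a b) : cutCost G τ a b x ≤ S.card :=
  Nat.sInf_le ⟨S, hS, rfl, hx⟩

lemma exists_card_eq_cutCost {a b : V} (hG : G.edgeSet.Finite) (hab : a ≠ b) (x : ℕ) :
    ∃ S : Finset (Sym2 V), ↑S ⊆ G.edgeSet ∧ S.card = cutCost G τ a b x ∧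
      (x : ℕ∞) ≤ wdist (G.deleteEdges ↑S) τ a b := by
  have hne : {c : ℕ | ∃ S : Finset (Sym2 V), ↑S ⊆ G.edgeSet ∧ S.card = c ∧
      (x : ℕ∞) ≤ wdist (G.deleteEdges ↑S) τ a b}.Nonempty := by
    refine ⟨_, hG.toFinset, hG.coe_toFinset.subset, rfl, ?_⟩
    rw [hG.coe_toFinset, deleteEdges_eq_bot.mpr subset_rfl,
      wdist_eq_top_of_not_reachable τ (reachable_bot.not.mpr hab)]
    exact le_top
  exact Nat.sInf_mem hne

section Series

variable {G₁ G₂ : SimpleGraph V} {V₁ V₂ : Set V} {u s t : V}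

lemma wdist_deleteEdges_sup_eq_add (hV : V₁ ∩ V₂ = {u})
    (hG₁ : ∀ a b, G₁.Adj a b → a ∈ V₁ ∧ b ∈ V₁) (hG₂ : ∀ a b, G₂.Adj a b → a ∈ V₂ ∧ b ∈ V₂)
    (hs : s ∈ V₁) (ht : t ∈ V₂) (S₁ S₂ : Set (Sym2 V)) :
    wdist (G₁.deleteEdges S₁ ⊔ G₂.deleteEdges S₂) τ s t =
      wdist (G₁.deleteEdges S₁) τ s u + wdist (G₂.deleteEdges S₂) τ u t :=
  wdist_sup_eq_add τ hV (fun a b h => hG₁ a b h.1) (fun a b h => hG₂ a b h.1) hs ht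

lemma cutCost_sup_le_add [Finite V] (hV : V₁ ∩ V₂ = {u})
    (hG₁ : ∀ a b, G₁.Adj a b → a ∈ V₁ ∧ b ∈ V₁) (hG₂ : ∀ a b, G₂.Adj a b → a ∈ V₂ ∧ b ∈ V₂)
    (hs : s ∈ V₁) (ht : t ∈ V₂) (hsu : s ≠ u) (htu : t ≠ u) (x y : ℕ) :
    cutCost (G₁ ⊔ G₂) τ s t x ≤ cutCost G₁ τ s u y + cutCost G₂ τ u t (x - y) := by
  classical
  obtain ⟨S₁, hS₁, hc₁, hd₁⟩ := exists_card_eq_cutCost τ G₁.edgeSet.toFinite hsu y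
  obtain ⟨S₂, hS₂, hc₂, hd₂⟩ := exists_card_eq_cutCost τ G₂.edgeSet.toFinite htu.symm (x - y)
  have hsub : ↑(S₁ ∪ S₂) ⊆ (G₁ ⊔ G₂).edgeSet := by
    rw [Finset.coe_union, edgeSet_sup]
    exact Set.union_subset_union hS₁ hS₂
  have hdist : (x : ℕ∞) ≤ wdist ((G₁ ⊔ G₂).deleteEdges ↑(S₁ ∪ S₂)) τ s t := calc
    (x : ℕ∞) ≤ y + (x - y : ℕ) := by norm_cast; omega
    _ ≤ wdist (G₁.deleteEdges ↑S₁) τ s u + wdist (G₂.deleteEdges ↑S₂) τ u t :=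
      add_le_add hd₁ hd₂
    _ = wdist (G₁.deleteEdges ↑S₁ ⊔ G₂.deleteEdges ↑S₂) τ s t :=
      (wdist_deleteEdges_sup_eq_add τ hV hG₁ hG₂ hs ht _ _).symm
    _ ≤ _ := by
      refine wdist_anti τ ?_ s t
      rw [deleteEdges_sup, Finset.coe_union]
      exact sup_le_sup (deleteEdges_anti Set.subset_union_left)
        (deleteEdges_anti Set.subset_union_right)
  calc cutCost (G₁ ⊔ G₂) τ s t x ≤ (S₁ ∪ S₂).card := cutCost_le τ hsub hdist
    _ ≤ S₁.card + S₂.card := Finset.card_union_le _ _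
    _ = _ := by rw [hc₁, hc₂]

lemma exists_add_cutCost_le_cutCost_sup [Finite V] (hV : V₁ ∩ V₂ = {u})
    (hG₁ : ∀ a b, G₁.Adj a b → a ∈ V₁ ∧ b ∈ V₁) (hG₂ : ∀ a b, G₂.Adj a b → a ∈ V₂ ∧ b ∈ V₂)
    (hs : s ∈ V₁) (ht : t ∈ V₂) (hst : s ≠ t) (x : ℕ) :
    ∃ y ≤ x, cutCost G₁ τ s u y + cutCost G₂ τ u t (x - y) ≤ cutCost (G₁ ⊔ G₂) τ s t x := by
  classical
  obtain ⟨S, -, hc, hd⟩ := exists_card_eq_cutCost τ (G₁ ⊔ G₂).edgeSet.toFinite hst x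
  let S₁ := S.filter (· ∈ G₁.edgeSet)
  let S₂ := S.filter (· ∈ G₂.edgeSet)
  have hsplit : (G₁ ⊔ G₂).deleteEdges ↑S = G₁.deleteEdges ↑S₁ ⊔ G₂.deleteEdges ↑S₂ := by
    rw [deleteEdges_sup, G₁.deleteEdges_eq_inter_edgeSet, G₂.deleteEdges_eq_inter_edgeSet]
    simp only [S₁, S₂, Finset.coe_filter]
    rfl
  rw [hsplit, wdist_deleteEdges_sup_eq_add τ hV hG₁ hG₂ hs ht] at hd
  obtain ⟨y, hyx, hy₁, hy₂⟩ := ENat.exists_le_and_sub_le_of_le_add hd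
  refine ⟨y, hyx, ?_⟩
  have hdisj : Disjoint S₁ S₂ := Finset.disjoint_left.mpr fun e he₁ he₂ =>
    Set.disjoint_left.mp (disjoint_edgeSet_of_inter_eq_singleton hV hG₁ hG₂)
      (Finset.mem_filter.mp he₁).2 (Finset.mem_filter.mp he₂).2
  calc cutCost G₁ τ s u y + cutCost G₂ τ u t (x - y)
      ≤ S₁.card + S₂.card :=
        add_le_add (cutCost_le τ (fun _ he => (Finset.mem_filter.mp he).2) hy₁)
          (cutCost_le τ (fun _ he => (Finset.mem_filter.mp he).2) hy₂)
    _ = (S₁ ∪ S₂).card := (Finset.card_union_of_disjoint hdisj).symm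
    _ ≤ S.card := Finset.card_le_card
      (Finset.union_subset (Finset.filter_subset _ _) (Finset.filter_subset _ _))
    _ = _ := hc

end Series

end

theorem stmt5_general {V : Type*} [Fintype V] (G₁ G₂ : SimpleGraph V) (V₁ V₂ : Set V)
    (u s t : V) (hV : V₁ ∩ V₂ = {u})
    (hG₁ : ∀ a b : V, G₁.Adj a b → a ∈ V₁ ∧ b ∈ V₁)
    (hG₂ : ∀ a b : V, G₂.Adj a b → a ∈ V₂ ∧ b ∈ V₂)
    (hs : s ∈ V₁) (hsu : s ≠ u) (ht : t ∈ V₂) (htu : t ≠ u)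
    (τ : Sym2 V → ℕ) (x : ℕ) :
    cutCost (G₁ ⊔ G₂) τ s t x =
      (Finset.range (x + 1)).inf' Finset.nonempty_range_add_one
        (fun x' => cutCost G₁ τ s u x' + cutCost G₂ τ u t (x - x')) := by
  refine le_antisymm (Finset.le_inf' _ _ fun y _ =>
    cutCost_sup_le_add τ hV hG₁ hG₂ hs ht hsu htu x y) ?_
  have hst : s ≠ t := fun h => htu (hV.subset ⟨h ▸ hs, ht⟩)
  obtain ⟨y, hyx, hy⟩ := exists_add_cutCost_le_cutCost_sup τ hV hG₁ hG₂ hs ht hst x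
  exact (Finset.inf'_le _ (Finset.mem_range.mpr (Nat.lt_succ_of_le hyx))).trans hy

/-- **Serial composition (dynamic program, series case).**
Let `G₁ = (V₁,E₁)` and `G₂ = (V₂,E₂)` be finite simple graphs with positive
integer edge lengths such that `V₁ ∩ V₂ = {u}`, let `s ∈ V₁ \ {u}` and
`t ∈ V₂ \ {u}`, and let `G = G₁ ∪ G₂` be the serial composition at `u`. Then
for every `x ∈ ℕ`:
`c_{s,t}(G,x) = min_{0 ≤ x' ≤ x} ( c_{s,u}(G₁,x') + c_{u,t}(G₂,x−x') )`. -/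
theorem stmt5 {V : Type*} [Fintype V] (G₁ G₂ : SimpleGraph V) (V₁ V₂ : Set V)
    (u s t : V) (hV : V₁ ∩ V₂ = {u})
    (hG₁ : ∀ a b : V, G₁.Adj a b → a ∈ V₁ ∧ b ∈ V₁)
    (hG₂ : ∀ a b : V, G₂.Adj a b → a ∈ V₂ ∧ b ∈ V₂)
    (hs : s ∈ V₁) (hsu : s ≠ u) (ht : t ∈ V₂) (htu : t ≠ u)
    (τ : Sym2 V → ℕ) (hτ : ∀ e ∈ (G₁ ⊔ G₂).edgeSet, 0 < τ e) (x : ℕ) :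
    cutCost (G₁ ⊔ G₂) τ s t x =
      (Finset.range (x + 1)).inf' Finset.nonempty_range_add_one
        (fun x' => cutCost G₁ τ s u x' + cutCost G₂ τ u t (x - x')) :=
  stmt5_general G₁ G₂ V₁ V₂ u s t hV hG₁ hG₂ hs hsu ht htu τ x
end

section
/- Let G_1 = (V_1,E_1) and G_2 = (V_2,E_2) be finite simple graphs with positive integer edge lengths such that V_1 ∩ V_2 = {s,t} with s ≠ t and E_1 ∩ E_2 = ∅, and let G = (V_1 ∪ V_2, E_1 ∪ E_2) be their union (the parallel composition of G_1 and G_2 at s,t). Then for every x ∈ ℕ: c_{s,t}(G,x) = c_{s,t}(G_1,x) + c_{s,t}(G_2,x). -/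
open SimpleGraph

private def wsum {V : Type*} (τ : Sym2 V → ℕ) {G : SimpleGraph V} {a b : V}
    (p : G.Walk a b) : ℕ := (p.edges.map τ).sum

private lemma wsum_nil {V : Type*} (τ : Sym2 V → ℕ) {G : SimpleGraph V} {a : V} :
    wsum τ (Walk.nil : G.Walk a a) = 0 := rfl

private lemma wsum_cons {V : Type*} (τ : Sym2 V → ℕ) {G : SimpleGraph V} {a b c : V}
    (h : G.Adj a b) (p : G.Walk b c) :
    wsum τ (Walk.cons h p) = τ s(a, b) + wsum τ p := by
  simp [wsum]

private lemma wsum_concat {V : Type*} (τ : Sym2 V → ℕ) {G : SimpleGraph V} {a b c : V}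
    (p : G.Walk a b) (h : G.Adj b c) :
    wsum τ (p.concat h) = wsum τ p + τ s(b, c) := by
  simp [wsum, Walk.edges_concat]

private lemma wsum_copy {V : Type*} (τ : Sym2 V → ℕ) {G : SimpleGraph V} {a b a' b' : V}
    (p : G.Walk a b) (ha : a = a') (hb : b = b') :
    wsum τ (p.copy ha hb) = wsum τ p := by
  simp [wsum]

private lemma wsum_transfer {V : Type*} (τ : Sym2 V → ℕ) {G H : SimpleGraph V} {a b : V}
    (p : G.Walk a b) (hp : ∀ e ∈ p.edges, e ∈ H.edgeSet) :
    wsum τ (p.transfer H hp) = wsum τ p := by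
  simp [wsum, Walk.edges_transfer]

/-- Endpoint of a walk in `A` is the start or lies in `V₁`. -/
private lemma end_mem {V : Type*} {A : SimpleGraph V} {V₁ : Set V}
    (hA : ∀ a b : V, A.Adj a b → a ∈ V₁ ∧ b ∈ V₁) :
    ∀ {a b : V}, A.Walk a b → b = a ∨ b ∈ V₁
  | _, _, Walk.nil => Or.inl rfl
  | _, _, Walk.cons h p => by
    rcases end_mem hA p with rfl | hb
    · exact Or.inr (hA _ _ h).2
    · exact Or.inr hb

private lemma split_aux {V : Type*} (τ : Sym2 V → ℕ) (s t : V) :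
    ∀ n : ℕ, ∀ (A B : SimpleGraph V) (V₁ V₂ : Set V),
    (∀ a b : V, A.Adj a b → a ∈ V₁ ∧ b ∈ V₁) →
    (∀ a b : V, B.Adj a b → a ∈ V₂ ∧ b ∈ V₂) →
    (V₁ ∩ V₂ ⊆ {s, t}) →
    ∀ (v : V) (p : (A ⊔ B).Walk v t), p.length ≤ n →
    ∀ (r : A.Walk s v),
    (∃ q : A.Walk s t, wsum τ q ≤ wsum τ r + wsum τ p) ∨
    (∃ q : B.Walk s t, wsum τ q ≤ wsum τ r + wsum τ p) := by
  intro n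
  induction n with
  | zero =>
    intro A B V₁ V₂ hA hB hV v p hlen r
    cases p with
    | nil => exact Or.inl ⟨r, by simp [wsum_nil]⟩
    | cons h p' => simp [Walk.length_cons] at hlen
  | succ n ih =>
    intro A B V₁ V₂ hA hB hV v p hlen r
    cases p with
    | nil => exact Or.inl ⟨r, by simp [wsum_nil]⟩
    | @cons _ w _ h p' =>
      have hlen' : p'.length ≤ n := by simp [Walk.length_cons] at hlen; omega
      rcases (sup_adj _ _ _ _).mp h with h1 | h2
      · -- edge in A: extend r
        rcases ih A B V₁ V₂ hA hB hV w p' hlen' (r.concat h1) with ⟨q, hq⟩ | ⟨q, hq⟩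
        · exact Or.inl ⟨q, by rw [wsum_concat] at hq; rw [wsum_cons]; omega⟩
        · exact Or.inr ⟨q, by rw [wsum_concat] at hq; rw [wsum_cons]; omega⟩
      · -- edge in B
        have hv2 : v ∈ V₂ := (hB _ _ h2).1
        have : v = s ∨ v = t := by
          rcases end_mem hA r with rfl | hv1
          · exact Or.inl rfl
          · exact hV ⟨hv1, hv2⟩
        rcases this with rfl | rfl
        · -- v = s: switch sides
          have hsub : ∀ e ∈ p'.edges, e ∈ (B ⊔ A).edgeSet := by
            intro e he
            have := p'.edges_subset_edgeSet he
            rwa [sup_comm] at this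
          rcases ih B A V₂ V₁ hB hA (by rwa [Set.inter_comm]) w (p'.transfer _ hsub)
              (by rwa [Walk.length_transfer]) (Walk.cons h2 Walk.nil) with ⟨q, hq⟩ | ⟨q, hq⟩
          · refine Or.inr ⟨q, ?_⟩
            rw [wsum_transfer, wsum_cons, wsum_nil] at hq
            rw [wsum_cons]; omega
          · refine Or.inl ⟨q, ?_⟩
            rw [wsum_transfer, wsum_cons, wsum_nil] at hq
            rw [wsum_cons]; omega
        · -- v = t: r is already an s-t walk in A
          exact Or.inl ⟨r, Nat.le_add_right _ _⟩

private lemma split {V : Type*} (τ : Sym2 V → ℕ) {s t : V} {A B : SimpleGraph V}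
    {V₁ V₂ : Set V}
    (hA : ∀ a b : V, A.Adj a b → a ∈ V₁ ∧ b ∈ V₁)
    (hB : ∀ a b : V, B.Adj a b → a ∈ V₂ ∧ b ∈ V₂)
    (hV : V₁ ∩ V₂ ⊆ {s, t}) (p : (A ⊔ B).Walk s t) :
    (∃ q : A.Walk s t, wsum τ q ≤ wsum τ p) ∨
    (∃ q : B.Walk s t, wsum τ q ≤ wsum τ p) := by
  have := split_aux τ s t p.length A B V₁ V₂ hA hB hV s p le_rfl Walk.nil
  simpa [wsum_nil] using this

private lemma wdist_le {V : Type*} (G : SimpleGraph V) (τ : Sym2 V → ℕ) {a b : V}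
    (p : G.Walk a b) : wdist G τ a b ≤ (wsum τ p : ℕ∞) :=
  iInf_le _ p

private lemma cut_nonempty {V : Type*} [Fintype V] (G : SimpleGraph V) (τ : Sym2 V → ℕ)
    (a b : V) (hab : a ≠ b) (x : ℕ) :
    {c : ℕ | ∃ S : Finset (Sym2 V), ↑S ⊆ G.edgeSet ∧ S.card = c ∧
      (x : ℕ∞) ≤ wdist (G.deleteEdges ↑S) τ a b}.Nonempty := by
  classical
  refine ⟨_, G.edgeSet.toFinite.toFinset, by rw [Set.Finite.coe_toFinset], rfl, ?_⟩
  have : IsEmpty ((G.deleteEdges ↑G.edgeSet.toFinite.toFinset).Walk a b) := by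
    constructor
    intro p
    cases p with
    | nil => exact hab rfl
    | cons h p' =>
      rw [deleteEdges_adj] at h
      exact h.2 (by simpa [Set.Finite.mem_toFinset] using h.1)
  rw [wdist, iInf_of_empty]
  exact le_top

private lemma restrict {V : Type*} (A B : SimpleGraph V) (τ : Sym2 V → ℕ) (s t : V)
    (x : ℕ) (S S₁ : Finset (Sym2 V)) (h₁ : ∀ e ∈ S, e ∈ A.edgeSet → e ∈ S₁)
    (hw : (x : ℕ∞) ≤ wdist ((A ⊔ B).deleteEdges ↑S) τ s t) :
    (x : ℕ∞) ≤ wdist (A.deleteEdges ↑S₁) τ s t := by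
  rw [wdist]
  refine le_iInf fun q => ?_
  have hsub : ∀ e ∈ q.edges, e ∈ ((A ⊔ B).deleteEdges ↑S).edgeSet := by
    intro e he
    have h2 := q.edges_subset_edgeSet he
    rw [edgeSet_deleteEdges] at h2 ⊢
    refine ⟨by rw [edgeSet_sup]; exact Or.inl h2.1, fun hS => h2.2 (h₁ e hS h2.1)⟩
  have h3 := hw.trans (wdist_le _ τ (q.transfer _ hsub))
  rwa [show (wsum τ (q.transfer _ hsub) : ℕ∞) = ((q.edges.map τ).sum : ℕ∞) by
    rw [wsum_transfer]; rfl] at h3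

/-- **Parallel composition (dynamic program, parallel case).**
Let `G₁ = (V₁,E₁)` and `G₂ = (V₂,E₂)` be finite simple graphs with positive
integer edge lengths such that `V₁ ∩ V₂ = {s,t}` with `s ≠ t` and
`E₁ ∩ E₂ = ∅`, and let `G = G₁ ∪ G₂` be the parallel composition at `s,t`.
Then for every `x ∈ ℕ`: `c_{s,t}(G,x) = c_{s,t}(G₁,x) + c_{s,t}(G₂,x)`. -/
theorem stmt6 {V : Type*} [Fintype V] (G₁ G₂ : SimpleGraph V) (V₁ V₂ : Set V)
    (s t : V) (hst : s ≠ t) (hV : V₁ ∩ V₂ = {s, t})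
    (hE : G₁.edgeSet ∩ G₂.edgeSet = ∅)
    (hG₁ : ∀ a b : V, G₁.Adj a b → a ∈ V₁ ∧ b ∈ V₁)
    (hG₂ : ∀ a b : V, G₂.Adj a b → a ∈ V₂ ∧ b ∈ V₂)
    (τ : Sym2 V → ℕ) (hτ : ∀ e ∈ (G₁ ⊔ G₂).edgeSet, 0 < τ e) (x : ℕ) :
    cutCost (G₁ ⊔ G₂) τ s t x = cutCost G₁ τ s t x + cutCost G₂ τ s t x := by

  classical
  have hVsub : V₁ ∩ V₂ ⊆ {s, t} := hV.subset
  apply le_antisymm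
  · obtain ⟨S₁, hS₁sub, hS₁card, hS₁w⟩ := Nat.sInf_mem (cut_nonempty G₁ τ s t hst x)
    obtain ⟨S₂, hS₂sub, hS₂card, hS₂w⟩ := Nat.sInf_mem (cut_nonempty G₂ τ s t hst x)
    have hle : cutCost (G₁ ⊔ G₂) τ s t x ≤ (S₁ ∪ S₂).card := by
      apply Nat.sInf_le
      refine ⟨S₁ ∪ S₂, ?_, rfl, ?_⟩
      · intro e he
        rw [Finset.coe_union] at he
        rw [edgeSet_sup]
        rcases he with he | he
        · exact Or.inl (hS₁sub he)
        · exact Or.inr (hS₂sub he)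
      · rw [wdist]
        refine le_iInf fun p => ?_
        set A := G₁.deleteEdges (↑S₁ : Set (Sym2 V)) with hAdef
        set B := G₂.deleteEdges (↑S₂ : Set (Sym2 V)) with hBdef
        have hsub : ∀ e ∈ p.edges, e ∈ (A ⊔ B).edgeSet := by
          intro e he
          have h2 := p.edges_subset_edgeSet he
          rw [edgeSet_deleteEdges, edgeSet_sup, Finset.coe_union] at h2
          rw [edgeSet_sup, hAdef, hBdef, edgeSet_deleteEdges, edgeSet_deleteEdges]
          rcases h2.1 with h3 | h3
          · exact Or.inl ⟨h3, fun hmem => h2.2 (Or.inl hmem)⟩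
          · exact Or.inr ⟨h3, fun hmem => h2.2 (Or.inr hmem)⟩
        have hA' : ∀ a b : V, A.Adj a b → a ∈ V₁ ∧ b ∈ V₁ :=
          fun a b h => hG₁ a b h.1
        have hB' : ∀ a b : V, B.Adj a b → a ∈ V₂ ∧ b ∈ V₂ :=
          fun a b h => hG₂ a b h.1
        have key : ((p.edges.map τ).sum : ℕ∞) = (wsum τ (p.transfer _ hsub) : ℕ∞) := by
          rw [wsum_transfer]; rfl
        rcases split τ hA' hB' hVsub (p.transfer _ hsub) with ⟨q, hq⟩ | ⟨q, hq⟩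
        · calc (x : ℕ∞) ≤ wdist A τ s t := hS₁w
            _ ≤ (wsum τ q : ℕ∞) := wdist_le _ _ q
            _ ≤ _ := by rw [key]; exact_mod_cast hq
        · calc (x : ℕ∞) ≤ wdist B τ s t := hS₂w
            _ ≤ (wsum τ q : ℕ∞) := wdist_le _ _ q
            _ ≤ _ := by rw [key]; exact_mod_cast hq
    calc cutCost (G₁ ⊔ G₂) τ s t x ≤ (S₁ ∪ S₂).card := hle
      _ ≤ S₁.card + S₂.card := Finset.card_union_le _ _
      _ = cutCost G₁ τ s t x + cutCost G₂ τ s t x := by rw [hS₁card, hS₂card]; rfl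
  · obtain ⟨S, hSsub, hScard, hSw⟩ := Nat.sInf_mem (cut_nonempty (G₁ ⊔ G₂) τ s t hst x)
    set S₁ := S.filter (· ∈ G₁.edgeSet) with hS₁def
    set S₂ := S.filter (· ∈ G₂.edgeSet) with hS₂def
    have h1 : cutCost G₁ τ s t x ≤ S₁.card := by
      apply Nat.sInf_le
      refine ⟨S₁, ?_, rfl, ?_⟩
      · intro e he
        rw [Finset.mem_coe, hS₁def, Finset.mem_filter] at he
        exact he.2
      · exact restrict G₁ G₂ τ s t x S S₁
          (fun e heS heE => by rw [hS₁def, Finset.mem_filter]; exact ⟨heS, heE⟩) hSw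
    have h2 : cutCost G₂ τ s t x ≤ S₂.card := by
      apply Nat.sInf_le
      refine ⟨S₂, ?_, rfl, ?_⟩
      · intro e he
        rw [Finset.mem_coe, hS₂def, Finset.mem_filter] at he
        exact he.2
      · refine restrict G₂ G₁ τ s t x S S₂
          (fun e heS heE => by rw [hS₂def, Finset.mem_filter]; exact ⟨heS, heE⟩) ?_
        rwa [sup_comm]
    have hdisj : Disjoint S₁ S₂ := by
      rw [Finset.disjoint_left]
      intro e he1 he2
      rw [hS₁def, Finset.mem_filter] at he1
      rw [hS₂def, Finset.mem_filter] at he2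
      have : e ∈ G₁.edgeSet ∩ G₂.edgeSet := ⟨he1.2, he2.2⟩
      rw [hE] at this
      exact this
    have hunion : S₁ ∪ S₂ = S := by
      ext e
      simp only [hS₁def, hS₂def, Finset.mem_union, Finset.mem_filter]
      constructor
      · rintro (⟨h, _⟩ | ⟨h, _⟩) <;> exact h
      · intro h
        have := hSsub h
        rw [edgeSet_sup] at this
        rcases this with h' | h'
        · exact Or.inl ⟨h, h'⟩
        · exact Or.inr ⟨h, h'⟩
    have hcard : S₁.card + S₂.card = S.card := by
      rw [← Finset.card_union_of_disjoint hdisj, hunion]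
    have hS' : cutCost (G₁ ⊔ G₂) τ s t x = S.card := hScard.symm
    omega
end

section
/- Let G = (V,E) be a finite simple graph with unit-length edges in which any two distinct vertices are at distance at most two, let s,t ∈ V be distinct, let ℓ ≥ 5 and k ∈ ℕ. Then there exists an edge set S ⊆ E with |S| ≤ k and dist_{G−S}(s,t) ≥ ℓ if and only if k ≥ min{deg_G(s), deg_G(t)}. -/
/-!
Deleting all edges at `s` (or at `t`) disconnects `s` from `t`. Conversely let `H = G − S` with
`dist_H(s,t) ≥ 5`. If every `H`-neighbour `v` of `t` lies on an edge `vx ∈ S` with `x` not an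
`H`-neighbour of `t`, then `v ↦ tv` (when `tv ∈ S`) and `v ↦ vx` (otherwise) injects the
`G`-neighbours of `t` into `S`. If this fails at some `v₀`, the same holds with `s` in place of `t`:
an `H`-neighbour `u` of `s` not adjacent to `t` has a common `G`-neighbour `w` with `v₀`, all
`S`-edges at `v₀` lead to `H`-neighbours of `t`, so `w` is within `H`-distance two of `t`, and the
absence of `s`–`t` walks of length at most four forces `uw ∈ S` and `w ∉ N_H(s)`.
-/

namespace SimpleGraph

variable {V : Type*} {G : SimpleGraph V}

theorem exists_adj_adj_of_edist_le_two {u v : V} (h : G.edist u v ≤ 2) (hne : u ≠ v)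
    (hnadj : ¬G.Adj u v) : ∃ w, G.Adj u w ∧ G.Adj w v := by
  by_contra! hw
  refine (two_lt_edist_iff.mpr ⟨hne, hnadj, ?_⟩).not_ge h
  exact Set.eq_empty_of_forall_notMem fun w hw' => hw w hw'.1 hw'.2.symm

theorem edist_deleteIncidenceSet_eq_top {s t : V} (hst : s ≠ t) :
    (G.deleteIncidenceSet s).edist s t = ⊤ := by
  refine edist_eq_top_of_not_reachable ?_
  rintro ⟨_ | ⟨hadj, _⟩⟩
  · exact hst rfl
  · exact (deleteIncidenceSet_adj.mp hadj).2.1 rfl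

theorem exists_card_eq_degree_edist_deleteEdges_eq_top [DecidableEq V] {s t : V}
    [Fintype (G.neighborSet s)] (hst : s ≠ t) :
    ∃ S : Finset (Sym2 V), ↑S ⊆ G.edgeSet ∧ S.card = G.degree s ∧
      (G.deleteEdges ↑S).edist s t = ⊤ := by
  refine ⟨G.incidenceFinset s, ?_, card_incidenceFinset_eq_degree G s, ?_⟩ <;>
    rw [coe_incidenceFinset]
  · exact G.incidenceSet_subset s
  · exact edist_deleteIncidenceSet_eq_top hst

theorem degree_le_card_of_forall_deleteEdges_adj {S : Finset (Sym2 V)} {t : V}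
    [Fintype (G.neighborSet t)]
    (h : ∀ v, (G.deleteEdges S).Adj t v → ∃ x, ¬(G.deleteEdges S).Adj t x ∧ s(v, x) ∈ S) :
    G.degree t ≤ S.card := by
  set H := G.deleteEdges S
  have partner : ∀ v ∈ G.neighborFinset t,
      ∃ x, s(v, x) ∈ S ∧ ¬H.Adj t x ∧ (x ≠ t → H.Adj t v) := by
    intro v hv
    rw [mem_neighborFinset] at hv
    by_cases hS : s(t, v) ∈ S
    · exact ⟨t, Sym2.eq_swap ▸ hS, H.irrefl, fun hne => absurd rfl hne⟩
    · have hH : H.Adj t v := deleteEdges_adj.mpr ⟨hv, hS⟩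
      obtain ⟨x, hx, hxS⟩ := h v hH
      exact ⟨x, hxS, hx, fun _ => hH⟩
  choose! f hfS hfH hft using partner
  rw [← card_neighborFinset_eq_degree]
  refine Finset.card_le_card_of_injOn (fun v => s(v, f v)) hfS ?_
  intro v hv v' hv' heq
  rcases Sym2.eq_iff.mp heq with ⟨hvv', -⟩ | ⟨hvv', hfv⟩
  · exact hvv'
  · -- `v` and `v'` would be each other's partners, but partners are not `H`-neighbours of `t`
    have hv't : v' ≠ t := (by simpa using hv' : G.Adj t v').ne'
    exact absurd (hvv' ▸ hft v hv (hfv ▸ hv't)) (hfH v' hv')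

theorem forall_exists_or_forall_exists_of_five_le_edist_deleteEdges
    (hdiam : ∀ u v, u ≠ v → G.edist u v ≤ 2) {S : Set (Sym2 V)} {s t : V}
    (h : 5 ≤ (G.deleteEdges S).edist s t) :
    (∀ v, (G.deleteEdges S).Adj t v → ∃ x, ¬(G.deleteEdges S).Adj t x ∧ s(v, x) ∈ S) ∨
      ∀ u, (G.deleteEdges S).Adj s u → ∃ x, ¬(G.deleteEdges S).Adj s x ∧ s(u, x) ∈ S := by
  set H := G.deleteEdges S
  have hH : ∀ {a b}, G.Adj a b → s(a, b) ∉ S → H.Adj a b := fun hab hS =>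
    deleteEdges_adj.mpr ⟨hab, hS⟩
  have no_short : ∀ p : H.Walk s t, p.length < 5 → False := fun p hp =>
    (h.trans (H.edist_le p)).not_gt (by exact_mod_cast hp)
  rw [or_iff_not_imp_left]
  push Not
  rintro ⟨v₀, htv₀, hv₀⟩ u hsu
  have hS_v₀ : ∀ x, s(x, v₀) ∈ S → H.Adj x t := fun x hx => by
    by_contra hxt
    exact hv₀ x (fun htx => hxt htx.symm) (Sym2.eq_swap ▸ hx)
  by_cases htu : G.Adj t u
  · refine ⟨t, fun hst => no_short (.cons hst .nil) (by simp), ?_⟩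
    by_contra hut
    exact no_short (.cons hsu (.cons (hH htu.symm hut) .nil)) (by simp)
  have huv₀ : u ≠ v₀ := by
    rintro rfl
    exact no_short (.cons hsu (.cons htv₀.symm .nil)) (by simp)
  have hnadj : ¬G.Adj u v₀ := by
    intro hG
    by_cases hS : s(u, v₀) ∈ S
    · exact htu (G.deleteEdges_le S (hS_v₀ u hS)).symm
    · exact no_short (.cons hsu (.cons (hH hG hS) (.cons htv₀.symm .nil))) (by simp)
  obtain ⟨w, huw, hwv₀⟩ := exists_adj_adj_of_edist_le_two (hdiam u v₀ huv₀) huv₀ hnadj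
  obtain ⟨q, hq⟩ : ∃ q : H.Walk w t, q.length ≤ 2 := by
    by_cases hS : s(w, v₀) ∈ S
    · exact ⟨.cons (hS_v₀ w hS) .nil, by simp⟩
    · exact ⟨.cons (hH hwv₀ hS) (.cons htv₀.symm .nil), by simp⟩
  refine ⟨w, fun hsw => no_short (.cons hsw q) (by simp; omega), ?_⟩
  by_contra huw'
  exact no_short (.cons hsu (.cons (hH huw huw') q)) (by simp; omega)

end SimpleGraph

open SimpleGraph

/-- **SP-MVE on graphs of diameter at most two (unit lengths).**
Let `G` be a finite simple graph in which any two distinct vertices are at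
distance at most two, let `s ≠ t`, `ℓ ≥ 5` and `k ∈ ℕ`. Then there is an edge
set `S ⊆ E` with `|S| ≤ k` and `dist_{G−S}(s,t) ≥ ℓ` (distance `+∞` when
disconnected, via `edist`) iff `k ≥ min{deg_G(s), deg_G(t)}`. -/
theorem stmt7 {V : Type*} [Fintype V] (G : SimpleGraph V) [DecidableRel G.Adj]
    (hdiam : ∀ u v : V, u ≠ v → G.edist u v ≤ 2)
    (s t : V) (hst : s ≠ t) (k ℓ : ℕ) (hℓ : 5 ≤ ℓ) :
    (∃ S : Finset (Sym2 V), ↑S ⊆ G.edgeSet ∧ S.card ≤ k ∧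
        (ℓ : ℕ∞) ≤ (G.deleteEdges ↑S).edist s t) ↔
    min (G.degree s) (G.degree t) ≤ k := by
  classical
  constructor
  · rintro ⟨S, -, hcard, hdist⟩
    have h5 : (5 : ℕ∞) ≤ (G.deleteEdges ↑S).edist s t := le_trans (by exact_mod_cast hℓ) hdist
    refine le_trans ?_ hcard
    rcases forall_exists_or_forall_exists_of_five_le_edist_deleteEdges hdiam h5 with ht | hs
    · exact (min_le_right _ _).trans (degree_le_card_of_forall_deleteEdges_adj ht)
    · exact (min_le_left _ _).trans (degree_le_card_of_forall_deleteEdges_adj hs)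
  · intro hk
    rcases le_total (G.degree s) (G.degree t) with hd | hd
    · obtain ⟨S, hS, hcard, htop⟩ := exists_card_eq_degree_edist_deleteEdges_eq_top (G := G) hst
      exact ⟨S, hS, hcard ▸ (min_eq_left hd ▸ hk), htop ▸ le_top⟩
    · obtain ⟨S, hS, hcard, htop⟩ :=
        exists_card_eq_degree_edist_deleteEdges_eq_top (G := G) hst.symm
      exact ⟨S, hS, hcard ▸ (min_eq_right hd ▸ hk), edist_comm.trans htop ▸ le_top⟩
end

section
/- Let G = (V,E) be a finite simple graph on n = |V| vertices without isolated vertices and with unit-length edges, and let s,t ∈ V be distinct. Let G' be the split graph with vertex set V ⊎ W, where W = { w^e_j : e ∈ E, j ∈ {1,…,n²} }, in which any two distinct vertices of V are adjacent, each w^e_j ∈ W is adjacent exactly to the two endpoints of e, and W is an independent set. Then for all k,ℓ ∈ ℕ: there exists S' ⊆ E(G') with |S'| ≤ n(n−1)/2 + k·n² and dist_{G'−S'}(s,t) ≥ 2ℓ if and only if there exists S ⊆ E with |S| ≤ k and dist_{G−S}(s,t) ≥ ℓ. -/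
/-- The relation generating the split graph of the reduction: the original
vertices (`Sum.inl`) are pairwise adjacent (a clique), each subdivision vertex
`w^e_j = Sum.inr (e, j)` is adjacent exactly to the two endpoints of `e`, and
the subdivision vertices form an independent set. -/
def splitRel {V : Type*} (G : SimpleGraph V) (n : ℕ) :
    (V ⊕ (↥G.edgeSet × Fin n)) → (V ⊕ (↥G.edgeSet × Fin n)) → Prop
  | Sum.inl _, Sum.inl _ => True
  | Sum.inl a, Sum.inr ej => a ∈ (ej.1 : Sym2 V)
  | _, _ => False

/-- The split graph `G'` of the reduction, on vertex set `V ⊎ (E × Fin n)`. -/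
def splitG {V : Type*} (G : SimpleGraph V) (n : ℕ) :
    SimpleGraph (V ⊕ (↥G.edgeSet × Fin n)) :=
  SimpleGraph.fromRel (splitRel G n)

/-!
Deleting edges of `G'` amounts to deleting, for each edge `e` of `G`, some of the `n²` paths
`a - w^e_j - c` of length two, and the clique edges on `V`. Deleting all `n(n-1)/2` clique edges
and one edge at each copy `w^e_j` of an edge `e ∈ S` makes every walk between vertices of `V`
alternate between `V` and `W`, so it projects to a walk in `G - S` of at most half its length.
Conversely, a budget of `n(n-1)/2 + k·n² < (k+1)·n²` edges can cut all `n²` copies of at most `k`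
edges `e`; every other edge of `G` survives as a path of length two, so distances in `G' - S'` are
at most twice those in `G - S`.
-/

open Finset

namespace SimpleGraph

variable {V W : Type*} {G : SimpleGraph V} {H : SimpleGraph (V ⊕ W)}

lemma exists_walk_length_eq_two_mul
    (hlift : ∀ a c, G.Adj a c → ∃ x, H.Adj (.inl a) (.inr x) ∧ H.Adj (.inr x) (.inl c))
    {a b : V} (q : G.Walk a b) : ∃ p : H.Walk (.inl a) (.inl b), p.length = 2 * q.length := by
  induction q with
  | nil => exact ⟨.nil, rfl⟩
  | cons hac _ ih =>
    obtain ⟨p, hp⟩ := ih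
    obtain ⟨x, h₁, h₂⟩ := hlift _ _ hac
    exact ⟨.cons h₁ (.cons h₂ p), by simp only [Walk.length_cons, hp]; ring⟩

lemma edist_inl_le_two_mul_edist
    (hlift : ∀ a c, G.Adj a c → ∃ x, H.Adj (.inl a) (.inr x) ∧ H.Adj (.inr x) (.inl c))
    (a b : V) : H.edist (.inl a) (.inl b) ≤ 2 * G.edist a b := by
  by_cases hab : G.Reachable a b
  · obtain ⟨q, hq⟩ := hab.exists_walk_length_eq_edist
    obtain ⟨p, hp⟩ := exists_walk_length_eq_two_mul hlift q
    calc H.edist _ _ ≤ p.length := edist_le p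
      _ = 2 * G.edist a b := by rw [hp, ← hq]; push_cast; rfl
  · simp [edist_eq_top_of_not_reachable hab]

/- The second conjunct, about walks leaving a `W`-vertex adjacent to `inl a`, is what makes the
induction on the walk go through. -/
lemma exists_walk_two_mul_length_le (hVV : ∀ a b, ¬ H.Adj (.inl a) (.inl b))
    (hWW : ∀ x y, ¬ H.Adj (.inr x) (.inr y))
    (hproj : ∀ a c x, H.Adj (.inl a) (.inr x) → H.Adj (.inl c) (.inr x) → a ≠ c → G.Adj a c)
    {u v : V ⊕ W} (p : H.Walk u v) {b : V} (hv : v = .inl b) :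
    (∀ a, u = .inl a → ∃ q : G.Walk a b, 2 * q.length ≤ p.length) ∧
    (∀ a, H.Adj (.inl a) u → ∃ q : G.Walk a b, 2 * q.length ≤ p.length + 1) := by
  induction p with
  | nil =>
    subst hv
    refine ⟨?_, fun a h => (hVV a b h).elim⟩
    rintro a ⟨⟩
    exact ⟨.nil, le_rfl⟩
  | @cons u z _ huz p ih =>
    obtain ⟨ih_inl, ih_adj⟩ := ih hv
    constructor
    · rintro a rfl
      obtain ⟨q, hq⟩ := ih_adj a huz
      exact ⟨q, by simpa only [Walk.length_cons] using hq⟩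
    · intro a hau
      rcases u with c | w
      · exact (hVV a c hau).elim
      rcases z with c | w'
      · obtain ⟨q, hq⟩ := ih_inl c rfl
        by_cases hac : a = c
        · subst hac
          exact ⟨q, by simp only [Walk.length_cons]; omega⟩
        · exact ⟨.cons (hproj a c w hau huz.symm hac) q, by simp only [Walk.length_cons]; omega⟩
      · exact (hWW w w' huz).elim

lemma two_mul_edist_le_edist_inl (hVV : ∀ a b, ¬ H.Adj (.inl a) (.inl b))
    (hWW : ∀ x y, ¬ H.Adj (.inr x) (.inr y))
    (hproj : ∀ a c x, H.Adj (.inl a) (.inr x) → H.Adj (.inl c) (.inr x) → a ≠ c → G.Adj a c)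
    (a b : V) : 2 * G.edist a b ≤ H.edist (.inl a) (.inl b) := by
  by_cases hab : H.Reachable (.inl a) (.inl b)
  · obtain ⟨p, hp⟩ := hab.exists_walk_length_eq_edist
    obtain ⟨q, hq⟩ := (exists_walk_two_mul_length_le hVV hWW hproj p rfl).1 a rfl
    calc 2 * G.edist a b ≤ 2 * q.length := by gcongr; exact edist_le q
      _ ≤ p.length := by exact_mod_cast hq
      _ = H.edist _ _ := hp
  · simp [edist_eq_top_of_not_reachable hab]

end SimpleGraph

section SplitGraph

variable {V : Type*} {G : SimpleGraph V} {m : ℕ}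

lemma splitG_adj_inl_inl {a b : V} : (splitG G m).Adj (.inl a) (.inl b) ↔ a ≠ b := by
  simp [splitG, splitRel]

lemma splitG_adj_inl_inr {a : V} {x : G.edgeSet × Fin m} :
    (splitG G m).Adj (.inl a) (.inr x) ↔ a ∈ (x.1 : Sym2 V) := by
  simp [splitG, splitRel]

lemma splitG_not_adj_inr_inr {x y : G.edgeSet × Fin m} :
    ¬ (splitG G m).Adj (.inr x) (.inr y) := by
  simp [splitG, splitRel]

lemma eq_of_inr_mem_of_inr_mem_splitG_edgeSet {z : Sym2 (V ⊕ (G.edgeSet × Fin m))}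
    (hz : z ∈ (splitG G m).edgeSet) {x y : G.edgeSet × Fin m} (hx : .inr x ∈ z)
    (hy : .inr y ∈ z) : x = y := by
  by_contra hxy
  obtain rfl := (Sym2.mem_and_mem_iff (Sum.inr_injective.ne hxy)).mp ⟨hx, hy⟩
  exact splitG_not_adj_inr_inr hz

end SplitGraph

section Reduction

open SimpleGraph

variable {V : Type*} [Fintype V] {G : SimpleGraph V} {m : ℕ}

lemma exists_edges_of_splitG_deleteEdges {S' : Finset (Sym2 (V ⊕ (G.edgeSet × Fin m)))}
    (hS' : ↑S' ⊆ (splitG G m).edgeSet) :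
    ∃ S : Finset (Sym2 V), ↑S ⊆ G.edgeSet ∧ #S * m ≤ #S' ∧
      ∀ a b, ((splitG G m).deleteEdges S').edist (.inl a) (.inl b) ≤
        2 * (G.deleteEdges S).edist a b := by
  classical
  let T : Finset G.edgeSet :=
    {e | ∀ j : Fin m, ∃ z ∈ S', (.inr (e, j) : V ⊕ (G.edgeSet × Fin m)) ∈ z}
  refine ⟨T.map (Function.Embedding.subtype _), ?_, ?_, edist_inl_le_two_mul_edist ?_⟩
  · simp
  · calc #(T.map _) * m = #(T ×ˢ (univ : Finset (Fin m))) := by simp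
      _ ≤ #S' := card_le_card_of_forall_subsingleton (fun x z => .inr x ∈ z) ?_ ?_
    · rintro ⟨e, j⟩ hej
      exact (mem_filter.mp (mem_product.mp hej).1).2 j
    · intro z hz x hx y hy
      exact eq_of_inr_mem_of_inr_mem_splitG_edgeSet (hS' hz) hx.2 hy.2
  · intro a c hac
    rw [deleteEdges_adj] at hac
    obtain ⟨j, hj⟩ : ∃ j : Fin m, ∀ z ∈ S', .inr (⟨s(a, c), hac.1⟩, j) ∉ z := by
      by_contra! h
      exact hac.2 (by simpa [T] using ⟨hac.1, h⟩)
    refine ⟨(⟨s(a, c), hac.1⟩, j), ?_, ?_⟩ <;> rw [deleteEdges_adj]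
    · exact ⟨splitG_adj_inl_inr.mpr (Sym2.mem_mk_left a c),
        fun hz => hj _ hz (Sym2.mem_mk_right _ _)⟩
    · exact ⟨(splitG_adj_inl_inr.mpr (Sym2.mem_mk_right a c)).symm,
        fun hz => hj _ hz (Sym2.mem_mk_left _ _)⟩

lemma exists_splitG_deleteEdges_of_edges (S : Finset (Sym2 V)) :
    ∃ S' : Finset (Sym2 (V ⊕ (G.edgeSet × Fin m))), ↑S' ⊆ (splitG G m).edgeSet ∧
      #S' ≤ (Fintype.card V).choose 2 + #S * m ∧
      ∀ a b, 2 * (G.deleteEdges S).edist a b ≤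
        ((splitG G m).deleteEdges S').edist (.inl a) (.inl b) := by
  classical
  let C : Finset (Sym2 (V ⊕ (G.edgeSet × Fin m))) :=
    (⊤ : SimpleGraph V).edgeFinset.map Function.Embedding.inl.sym2Map
  let D : Finset (Sym2 (V ⊕ (G.edgeSet × Fin m))) :=
    (({e | e.1 ∈ S} : Finset G.edgeSet) ×ˢ (univ : Finset (Fin m))).image
      fun x => s(Sum.inl x.1.1.out.1, Sum.inr x)
  have mem_D : ∀ x : G.edgeSet × Fin m, x.1.1 ∈ S → s(.inl x.1.1.out.1, .inr x) ∈ D :=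
    fun x hx => mem_image.mpr ⟨x, by simpa using hx, rfl⟩
  refine ⟨C ∪ D, ?_, ?_, two_mul_edist_le_edist_inl ?_ ?_ ?_⟩
  · intro z hz
    rcases mem_union.mp hz with hz | hz
    · obtain ⟨e, he, rfl⟩ := mem_map.mp hz
      induction e using Sym2.ind with
      | _ a b => exact splitG_adj_inl_inl.mpr (by simpa using he)
    · obtain ⟨x, -, rfl⟩ := mem_image.mp hz
      exact splitG_adj_inl_inr.mpr (Sym2.out_fst_mem _)
  · calc #(C ∪ D) ≤ #C + #D := card_union_le _ _
      _ ≤ (Fintype.card V).choose 2 + #S * m := by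
        gcongr
        · rw [card_map, card_edgeFinset_top_eq_card_choose_two]
        · calc #D ≤ #(({e | e.1 ∈ S} : Finset G.edgeSet) ×ˢ (univ : Finset (Fin m))) :=
                card_image_le
            _ ≤ #S * m := by
              rw [card_product, card_univ, Fintype.card_fin]
              gcongr
              exact card_le_card_of_injOn Subtype.val (fun e he => by simpa using he)
                Subtype.val_injective.injOn
  · intro a b h
    rw [deleteEdges_adj] at h
    exact h.2 <| mem_union_left _ <|
      mem_map.mpr ⟨s(a, b), by simpa using splitG_adj_inl_inl.mp h.1, rfl⟩
  · exact fun x y h => splitG_not_adj_inr_inr h.1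
  · intro a c x ha hc hac
    rw [deleteEdges_adj] at ha hc ⊢
    have hx : x.1.1 = s(a, c) := (Sym2.mem_and_mem_iff hac).mp
      ⟨splitG_adj_inl_inr.mp ha.1, splitG_adj_inl_inr.mp hc.1⟩
    refine ⟨(mem_edgeSet G).mp (hx ▸ x.1.2), fun hac_S => ?_⟩
    have hD := mem_D x (hx ▸ hac_S)
    rw [hx] at hD
    rcases Sym2.mem_iff.mp (Sym2.out_fst_mem s(a, c)) with h | h <;> rw [h] at hD
    · exact ha.2 (mem_union_right _ hD)
    · exact hc.2 (mem_union_right _ hD)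

end Reduction

theorem stmt8_general {V : Type*} [Fintype V] (G : SimpleGraph V) (s t : V) (k ℓ : ℕ) :
    (∃ S' : Finset (Sym2 (V ⊕ (↥G.edgeSet × Fin ((Fintype.card V) ^ 2)))),
        ↑S' ⊆ (splitG G ((Fintype.card V) ^ 2)).edgeSet ∧
        S'.card ≤ Fintype.card V * (Fintype.card V - 1) / 2
          + k * (Fintype.card V) ^ 2 ∧
        ((2 * ℓ : ℕ) : ℕ∞) ≤
          ((splitG G ((Fintype.card V) ^ 2)).deleteEdges ↑S').edist
            (Sum.inl s) (Sum.inl t)) ↔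
    (∃ S : Finset (Sym2 V), ↑S ⊆ G.edgeSet ∧ S.card ≤ k ∧
        (ℓ : ℕ∞) ≤ (G.deleteEdges ↑S).edist s t) := by
  set n := Fintype.card V
  rw [← Nat.choose_two_right]
  constructor
  · rintro ⟨S', hS', hcard, hdist⟩
    obtain ⟨S, hS, hSS', hedist⟩ := exists_edges_of_splitG_deleteEdges hS'
    refine ⟨S, hS, ?_, ?_⟩
    · have hn : n.choose 2 < n ^ 2 := Nat.choose_lt_pow (Fintype.card_pos_iff.mpr ⟨s⟩).ne' le_rfl
      have : #S * n ^ 2 < (k + 1) * n ^ 2 := by linarith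
      exact Nat.lt_succ_iff.mp (Nat.lt_of_mul_lt_mul_right this)
    · rw [← ENat.mul_le_mul_left_iff two_ne_zero (by decide)]
      exact_mod_cast hdist.trans (hedist s t)
  · rintro ⟨S, -, hk, hdist⟩
    obtain ⟨S', hS', hcard, hedist⟩ := exists_splitG_deleteEdges_of_edges (m := n ^ 2) S
    refine ⟨S', hS', hcard.trans (by gcongr), ?_⟩
    calc ((2 * ℓ : ℕ) : ℕ∞) = 2 * ℓ := by push_cast; rfl
      _ ≤ 2 * (G.deleteEdges S).edist s t := by gcongr
      _ ≤ _ := hedist s t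

/-- **Correctness of the reduction to split graphs (unit lengths).**
Let `G` be a finite simple graph on `n` vertices without isolated vertices,
`s ≠ t` vertices, and let `G'` be the split graph with vertex set `V ⊎ W`,
`W = {w^e_j : e ∈ E, j ∈ Fin n²}`, where `V` is turned into a clique, each
`w^e_j` is adjacent exactly to the endpoints of `e`, and `W` is independent.
Then for all `k, ℓ ∈ ℕ`: there is `S' ⊆ E(G')` with
`|S'| ≤ n(n−1)/2 + k·n²` and `dist_{G'−S'}(s,t) ≥ 2ℓ` iff there is `S ⊆ E(G)`
with `|S| ≤ k` and `dist_{G−S}(s,t) ≥ ℓ`. -/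
theorem stmt8 {V : Type*} [Fintype V] (G : SimpleGraph V)
    (hiso : ∀ v : V, ∃ w : V, G.Adj v w) (s t : V) (hst : s ≠ t) (k ℓ : ℕ) :
    (∃ S' : Finset (Sym2 (V ⊕ (↥G.edgeSet × Fin ((Fintype.card V) ^ 2)))),
        ↑S' ⊆ (splitG G ((Fintype.card V) ^ 2)).edgeSet ∧
        S'.card ≤ Fintype.card V * (Fintype.card V - 1) / 2
          + k * (Fintype.card V) ^ 2 ∧
        ((2 * ℓ : ℕ) : ℕ∞) ≤
          ((splitG G ((Fintype.card V) ^ 2)).deleteEdges ↑S').edist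
            (Sum.inl s) (Sum.inl t)) ↔
    (∃ S : Finset (Sym2 V), ↑S ⊆ G.edgeSet ∧ S.card ≤ k ∧
        (ℓ : ℕ∞) ≤ (G.deleteEdges ↑S).edist s t) :=
  stmt8_general G s t k ℓ
end

section
/- Let G = (V,E) be a finite simple graph with positive integer edge lengths τ, let s,t ∈ V be distinct, and let k,ℓ ∈ ℕ. Let G' be the complete graph on V with edge lengths τ' given by τ'(e) = τ(e) for e ∈ E and τ'(e) = ℓ+1 for every edge e of G' not in E. Then there exists S' ⊆ E(G') with |S'| ≤ k and dist^{τ'}_{G'−S'}(s,t) ≥ ℓ if and only if there exists S ⊆ E with |S| ≤ k and dist^{τ}_{G−S}(s,t) ≥ ℓ. -/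
/-- **Correctness of the reduction to complete graphs (general lengths).**
Let `G` be a finite simple graph with positive integer edge lengths `τ`,
`s ≠ t` vertices, `k, ℓ ∈ ℕ`. Let `G'` be the complete graph on `V` with
lengths `τ'(e) = τ(e)` for `e ∈ E` and `τ'(e) = ℓ + 1` for the remaining
edges. Then there is `S' ⊆ E(G')` with `|S'| ≤ k` and
`dist^{τ'}_{G'−S'}(s,t) ≥ ℓ` iff there is `S ⊆ E(G)` with `|S| ≤ k` and
`dist^{τ}_{G−S}(s,t) ≥ ℓ`. -/
theorem stmt10 {V : Type*} [Fintype V] (G : SimpleGraph V) [DecidableRel G.Adj]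
    (τ : Sym2 V → ℕ) (hpos : ∀ e ∈ G.edgeSet, 0 < τ e)
    (s t : V) (hst : s ≠ t) (k ℓ : ℕ) :
    (∃ S' : Finset (Sym2 V), ↑S' ⊆ (⊤ : SimpleGraph V).edgeSet ∧
        S'.card ≤ k ∧
        (ℓ : ℕ∞) ≤ wdist ((⊤ : SimpleGraph V).deleteEdges ↑S')
          (fun e => if e ∈ G.edgeSet then τ e else ℓ + 1) s t) ↔
    (∃ S : Finset (Sym2 V), ↑S ⊆ G.edgeSet ∧ S.card ≤ k ∧
        (ℓ : ℕ∞) ≤ wdist (G.deleteEdges ↑S) τ s t) := by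
  classical
  constructor
  · rintro ⟨S', hS'sub, hcard, hdist⟩
    refine ⟨S' ∩ G.edgeSet.toFinset, ?_, ?_, ?_⟩
    · intro e he
      simp only [Finset.coe_inter, Set.mem_inter_iff, Finset.mem_coe,
        Finset.mem_inter, Set.mem_toFinset] at he
      exact he.2
    · exact le_trans (Finset.card_le_card Finset.inter_subset_left) hcard
    · rw [wdist, le_iInf_iff] at hdist ⊢
      intro p
      have hG : ∀ e ∈ p.edges, e ∈ G.edgeSet ∧ e ∉ S' := by
        intro e he
        have h1 := p.edges_subset_edgeSet he
        rw [SimpleGraph.edgeSet_deleteEdges, Set.mem_diff] at h1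
        refine ⟨h1.1, fun hmem => h1.2 ?_⟩
        simp only [Finset.coe_inter, Set.mem_inter_iff, Finset.mem_coe,
          Set.mem_toFinset]
        exact ⟨hmem, h1.1⟩
      have hall : ∀ e ∈ p.edges,
          e ∈ ((⊤ : SimpleGraph V).deleteEdges ↑S').edgeSet := by
        intro e he
        rw [SimpleGraph.edgeSet_deleteEdges, Set.mem_diff]
        exact ⟨SimpleGraph.edgeSet_mono le_top (hG e he).1, (hG e he).2⟩
      have := hdist (p.transfer _ hall)
      rw [SimpleGraph.Walk.edges_transfer] at this
      have hmap : p.edges.map (fun e => if e ∈ G.edgeSet then τ e else ℓ + 1)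
          = p.edges.map τ := by
        apply List.map_congr_left
        intro e he
        exact if_pos (hG e he).1
      rwa [hmap] at this
  · rintro ⟨S, hSsub, hcard, hdist⟩
    refine ⟨S, fun e he => SimpleGraph.edgeSet_mono le_top (hSsub he), hcard, ?_⟩
    rw [wdist, le_iInf_iff] at hdist ⊢
    intro p
    by_cases hc : ∀ e ∈ p.edges, e ∈ G.edgeSet
    · have hall : ∀ e ∈ p.edges, e ∈ (G.deleteEdges ↑S).edgeSet := by
        intro e he
        have h1 := p.edges_subset_edgeSet he
        rw [SimpleGraph.edgeSet_deleteEdges, Set.mem_diff] at h1 ⊢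
        exact ⟨hc e he, h1.2⟩
      have := hdist (p.transfer _ hall)
      rw [SimpleGraph.Walk.edges_transfer] at this
      have hmap : p.edges.map (fun e => if e ∈ G.edgeSet then τ e else ℓ + 1)
          = p.edges.map τ := by
        apply List.map_congr_left
        intro e he
        exact if_pos (hc e he)
      rwa [hmap]
    · push_neg at hc
      obtain ⟨e, he, hne⟩ := hc
      have hmem : (ℓ + 1) ∈ p.edges.map
          (fun e => if e ∈ G.edgeSet then τ e else ℓ + 1) := by
        refine List.mem_map.2 ⟨e, he, ?_⟩
        exact if_neg hne
      have hsum : ℓ + 1 ≤ (p.edges.map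
          (fun e => if e ∈ G.edgeSet then τ e else ℓ + 1)).sum :=
        List.single_le_sum (fun x _ => Nat.zero_le x) _ hmem
      exact_mod_cast le_trans (Nat.le_succ ℓ) hsum
end

section
/- Let G = (V_1 ⊎ V_2 ⊎ V_3, E) be a tripartite graph on n vertices (every edge joins two different parts), let h ∈ ℕ, and let G' be the unit-length graph constructed as follows. The vertices of G' are V_1 ∪ V_2 ∪ V_3, a disjoint copy V_2' = {v' : v ∈ V_2} of V_2, two new vertices s and t, and the internal vertices of the edge-gadgets below; here, for α ≥ 2, a length-α edge-gadget between two vertices a and b consists of n internally vertex-disjoint paths of length α from a to b through fresh internal vertices (for α = 2 each path is a single new common neighbor of a and b). The edges of G' are: the edge {s,v} for every v ∈ V_1; the edge {v,t} for every v ∈ V_3; the edge {v,v'} for every v ∈ V_2; a length-2 edge-gadget between u and v for every edge {u,v} ∈ E with u ∈ V_1 and v ∈ V_2; a length-2 edge-gadget between u' and v for every edge {u,v} ∈ E with u ∈ V_2 and v ∈ V_3; a length-5 edge-gadget between u and v for every edge {u,v} ∈ E with u ∈ V_1 and v ∈ V_3; a length-4 edge-gadget between s and every v ∈ V_2; and a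 length-4 edge-gadget between t and every v' ∈ V_2'. Then G has a vertex cover of size at most h if and only if there exists an edge set S ⊆ E(G') with |S| ≤ h such that every st-path in G'−S has at least 9 edges. -/
/-- The vertex set of the graph `G'` of the reduction from Vertex Cover on
tripartite graphs: the original vertices (`orig`), a copy `V₂'` of `V₂`
(`copy`, only copies of vertices of `V₂` get incident edges), the two new
vertices `src = s` and `tgt = t`, and the internal vertices of the
edge-gadgets. For each of the `n` internally vertex-disjoint paths of a
gadget, the internal vertices are indexed consecutively:
`ga u v j` is the internal vertex of the `j`-th path of the length-2 gadget
for an edge `{u,v} ∈ V₁×V₂`; `gb u v j` is the internal vertex of the `j`-th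
path of the length-2 gadget between `u' ∈ V₂'` and `v ∈ V₃`;
`gc u v j i` (`i ∈ Fin 4`) are the internal vertices of the `j`-th path of
the length-5 gadget for an edge `{u,v} ∈ V₁×V₃`; `gd v j i` (`i ∈ Fin 3`)
are the internal vertices of the `j`-th path of the length-4 gadget between
`s` and `v ∈ V₂`; `ge v j i` are the internal vertices of the `j`-th path of
the length-4 gadget between `t` and `v' ∈ V₂'`. -/
inductive RV (V : Type*) (n : ℕ) where
  | orig : V → RV V n
  | copy : V → RV V n
  | src : RV V n
  | tgt : RV V n
  | ga : V → V → Fin n → RV V n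
  | gb : V → V → Fin n → RV V n
  | gc : V → V → Fin n → Fin 4 → RV V n
  | gd : V → Fin n → Fin 3 → RV V n
  | ge : V → Fin n → Fin 3 → RV V n

/-- The relation generating the edges of the reduced graph `G'`:
the edge `{s,v}` for every `v ∈ V₁`; the edge `{v,t}` for every `v ∈ V₃`;
the edge `{v,v'}` for every `v ∈ V₂`; a length-2 gadget between `u` and `v`
for every edge `{u,v} ∈ E ∩ (V₁ × V₂)`; a length-2 gadget between `u'` and
`v` for every edge `{u,v} ∈ E ∩ (V₂ × V₃)`; a length-5 gadget between `u` and
`v` for every edge `{u,v} ∈ E ∩ (V₁ × V₃)`; a length-4 gadget between `s` and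
every `v ∈ V₂`; and a length-4 gadget between `t` and every `v' ∈ V₂'`. -/
def rrel {V : Type*} (G : SimpleGraph V) (V1 V2 V3 : Set V) (n : ℕ) :
    RV V n → RV V n → Prop
  | RV.src, RV.orig v => v ∈ V1
  | RV.orig v, RV.tgt => v ∈ V3
  | RV.orig v, RV.copy w => v = w ∧ v ∈ V2
  | RV.ga u v _, RV.orig w =>
      G.Adj u v ∧ u ∈ V1 ∧ v ∈ V2 ∧ (w = u ∨ w = v)
  | RV.gb u v _, RV.copy w => G.Adj u v ∧ u ∈ V2 ∧ v ∈ V3 ∧ w = u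
  | RV.gb u v _, RV.orig w => G.Adj u v ∧ u ∈ V2 ∧ v ∈ V3 ∧ w = v
  | RV.gc u v _ i, RV.orig w =>
      G.Adj u v ∧ u ∈ V1 ∧ v ∈ V3 ∧
        (((i : ℕ) = 0 ∧ w = u) ∨ ((i : ℕ) = 3 ∧ w = v))
  | RV.gc u v j i, RV.gc u' v' j' i' =>
      u = u' ∧ v = v' ∧ j = j' ∧ G.Adj u v ∧ u ∈ V1 ∧ v ∈ V3 ∧
        (i' : ℕ) = (i : ℕ) + 1
  | RV.src, RV.gd v _ i => v ∈ V2 ∧ (i : ℕ) = 0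
  | RV.gd v _ i, RV.orig w => v ∈ V2 ∧ w = v ∧ (i : ℕ) = 2
  | RV.gd v j i, RV.gd v' j' i' =>
      v = v' ∧ j = j' ∧ v ∈ V2 ∧ (i' : ℕ) = (i : ℕ) + 1
  | RV.tgt, RV.ge v _ i => v ∈ V2 ∧ (i : ℕ) = 0
  | RV.ge v _ i, RV.copy w => v ∈ V2 ∧ w = v ∧ (i : ℕ) = 2
  | RV.ge v j i, RV.ge v' j' i' =>
      v = v' ∧ j = j' ∧ v ∈ V2 ∧ (i' : ℕ) = (i : ℕ) + 1
  | _, _ => False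

namespace Red16

variable {V : Type*}

open scoped Classical

open Classical in
noncomputable def ell (V1 V2 : Set V) {n : ℕ} (C : Finset V) : RV V n → ℤ
  | .src => 0
  | .tgt => 9
  | .orig v => if v ∈ V1 then (if v ∈ C then 3 else 1)
      else if v ∈ V2 then (if v ∈ C then 2 else 4)
      else (if v ∈ C then 6 else 8)
  | .copy v => if v ∈ C then 7 else 5
  | .ga _ v _ => if v ∈ C then 2 else 3
  | .gb u _ _ => if u ∈ C then 7 else 6
  | .gc u _ _ i => ((i : ℕ) : ℤ) + (if u ∈ C then 4 else 2)
  | .gd _ _ i => ((i : ℕ) : ℤ) + 1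
  | .ge _ _ i => 8 - ((i : ℕ) : ℤ)

open Classical in
noncomputable def emap (V1 V2 : Set V) (n : ℕ) (v : V) : Sym2 (RV V n) :=
  if v ∈ V1 then s(RV.src, RV.orig v)
  else if v ∈ V2 then s(RV.orig v, RV.copy v)
  else s(RV.orig v, RV.tgt)

lemma lip {G : SimpleGraph V} {V1 V2 V3 : Set V} {n : ℕ} {C : Finset V}
    (h12 : V1 ∩ V2 = ∅) (h13 : V1 ∩ V3 = ∅) (h23 : V2 ∩ V3 = ∅)
    (hcov : ∀ a b, G.Adj a b → a ∈ C ∨ b ∈ C)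
    {x y : RV V n} (hr : rrel G V1 V2 V3 n x y)
    (hS : s(x, y) ∉ C.image (emap V1 V2 n)) :
    |ell V1 V2 C x - ell V1 V2 C y| ≤ 1 := by
  have e12 : ∀ v, v ∈ V1 → v ∈ V2 → False := fun v a b =>
    (Set.eq_empty_iff_forall_notMem.1 h12 v) ⟨a, b⟩
  have e13 : ∀ v, v ∈ V1 → v ∈ V3 → False := fun v a b =>
    (Set.eq_empty_iff_forall_notMem.1 h13 v) ⟨a, b⟩
  have e23 : ∀ v, v ∈ V2 → v ∈ V3 → False := fun v a b =>
    (Set.eq_empty_iff_forall_notMem.1 h23 v) ⟨a, b⟩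
  cases x <;> cases y <;> simp only [rrel] at hr
  case src.orig v =>
    have hvC : v ∉ C := fun hv =>
      hS (Finset.mem_image.mpr ⟨v, hv, by simp [emap, hr]⟩)
    simp only [ell]; rw [abs_le]; split_ifs <;> simp_all <;> omega
  case src.gd v j i =>
    obtain ⟨h2, hi⟩ := hr
    simp only [ell]; rw [abs_le]; omega
  case orig.copy v w =>
    obtain ⟨rfl, h2⟩ := hr
    have hv1 : v ∉ V1 := fun hh => e12 v hh h2
    have hvC : v ∉ C := fun hv =>
      hS (Finset.mem_image.mpr ⟨v, hv, by simp [emap, hv1, h2]⟩)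
    simp only [ell]; rw [abs_le]; split_ifs <;> simp_all <;> omega
  case orig.tgt v =>
    have hv1 : v ∉ V1 := fun hh => e13 v hh hr
    have hv2 : v ∉ V2 := fun hh => e23 v hh hr
    have hvC : v ∉ C := fun hv =>
      hS (Finset.mem_image.mpr ⟨v, hv, by simp [emap, hv1, hv2]⟩)
    simp only [ell]; rw [abs_le]; split_ifs <;> simp_all <;> omega
  case tgt.ge v j i =>
    obtain ⟨h2, hi⟩ := hr
    simp only [ell]; rw [abs_le]; omega
  case ga.orig u v j w =>
    have hcv := hcov u v hr.1
    have h1 := hr.2.1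
    have h2 := hr.2.2.1
    have hv1 : v ∉ V1 := fun hh => e12 v hh h2
    obtain ⟨ha, -, -, rfl | rfl⟩ := hr <;>
      · simp only [ell]; rw [abs_le]; split_ifs <;> simp_all <;> omega
  case gb.copy u v j w =>
    have hcv := hcov u v hr.1
    have h2 := hr.2.1
    have h3 := hr.2.2.1
    obtain ⟨-, -, -, rfl⟩ := hr
    simp only [ell]; rw [abs_le]; split_ifs <;> simp_all <;> omega
  case gb.orig u v j w =>
    have hcv := hcov u v hr.1
    have h2 := hr.2.1
    have h3 := hr.2.2.1
    have hv1 : v ∉ V1 := fun hh => e13 v hh h3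
    have hv2 : v ∉ V2 := fun hh => e23 v hh h3
    obtain ⟨-, -, -, rfl⟩ := hr
    simp only [ell]; rw [abs_le]; split_ifs <;> simp_all <;> omega
  case gc.orig u v j i w =>
    have hcv := hcov u v hr.1
    have h1 := hr.2.1
    have h3 := hr.2.2.1
    have hv1 : v ∉ V1 := fun hh => e13 v hh h3
    have hv2 : v ∉ V2 := fun hh => e23 v hh h3
    obtain ⟨-, -, -, ⟨hi, rfl⟩ | ⟨hi, rfl⟩⟩ := hr <;>
      · simp only [ell]; rw [abs_le]; split_ifs <;> simp_all <;> omega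
  case gc.gc u v j i u' v' j' i' =>
    obtain ⟨rfl, rfl, rfl, ha, h1, h3, hi⟩ := hr
    simp only [ell]; rw [abs_le]; split_ifs <;> omega
  case gd.orig v j i w =>
    have h2 := hr.1
    have hv1 : v ∉ V1 := fun hh => e12 v hh h2
    obtain ⟨-, rfl, hi⟩ := hr
    simp only [ell]; rw [abs_le]; split_ifs <;> simp_all <;> omega
  case gd.gd v j i v' j' i' =>
    obtain ⟨rfl, rfl, h2, hi⟩ := hr
    simp only [ell]; rw [abs_le]; omega
  case ge.copy v j i w =>
    have h2 := hr.1
    obtain ⟨-, rfl, hi⟩ := hr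
    simp only [ell]; rw [abs_le]; split_ifs <;> simp_all <;> omega
  case ge.ge v j i v' j' i' =>
    obtain ⟨rfl, rfl, h2, hi⟩ := hr
    simp only [ell]; rw [abs_le]; omega

lemma walk_bound {α : Type*} {G : SimpleGraph α} (f : α → ℤ)
    (hf : ∀ x y, G.Adj x y → |f x - f y| ≤ 1) :
    ∀ {a b : α} (p : G.Walk a b), |f a - f b| ≤ p.length := by
  intro a b p
  induction p with
  | nil => simp
  | @cons a c b hadj q ih =>
    have h1 : |f a - f b| ≤ |f a - f c| + |f c - f b| := abs_sub_le _ _ _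
    have h2 := hf a c hadj
    simp only [SimpleGraph.Walk.length_cons]
    push_cast
    omega

lemma forward {G : SimpleGraph V} {V1 V2 V3 : Set V} {n : ℕ} {C : Finset V}
    (hcover : V1 ∪ V2 ∪ V3 = Set.univ)
    (h12 : V1 ∩ V2 = ∅) (h13 : V1 ∩ V3 = ∅) (h23 : V2 ∩ V3 = ∅)
    (hcov : ∀ a b, G.Adj a b → a ∈ C ∨ b ∈ C) :
    ↑(C.image (emap V1 V2 n)) ⊆ (SimpleGraph.fromRel (rrel G V1 V2 V3 n)).edgeSet ∧
    (C.image (emap V1 V2 n)).card ≤ C.card ∧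
    ∀ p : ((SimpleGraph.fromRel (rrel G V1 V2 V3 n)).deleteEdges
        ↑(C.image (emap V1 V2 n))).Walk RV.src RV.tgt, p.IsPath → 9 ≤ p.length := by
  refine ⟨?_, Finset.card_image_le, ?_⟩
  · intro e he
    simp only [Finset.coe_image, Set.mem_image, Finset.mem_coe] at he
    obtain ⟨v, hv, rfl⟩ := he
    have hv123 : v ∈ V1 ∪ V2 ∪ V3 := by rw [hcover]; trivial
    unfold emap
    split_ifs with hv1 hv2
    · rw [SimpleGraph.mem_edgeSet, SimpleGraph.fromRel_adj]
      exact ⟨by simp, Or.inl hv1⟩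
    · rw [SimpleGraph.mem_edgeSet, SimpleGraph.fromRel_adj]
      exact ⟨by simp, Or.inl ⟨rfl, hv2⟩⟩
    · have hv3 : v ∈ V3 := by
        rcases hv123 with (h | h) | h
        · exact absurd h hv1
        · exact absurd h hv2
        · exact h
      rw [SimpleGraph.mem_edgeSet, SimpleGraph.fromRel_adj]
      exact ⟨by simp, Or.inl hv3⟩
  · intro p _
    have hf : ∀ x y, ((SimpleGraph.fromRel (rrel G V1 V2 V3 n)).deleteEdges
        ↑(C.image (emap V1 V2 n))).Adj x y → |ell V1 V2 C x - ell V1 V2 C y| ≤ 1 := by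
      intro x y hxy
      rw [SimpleGraph.deleteEdges_adj] at hxy
      obtain ⟨hadj, hnot⟩ := hxy
      rw [SimpleGraph.fromRel_adj] at hadj
      rcases hadj.2 with hr | hr
      · exact lip h12 h13 h23 hcov hr (by simpa using hnot)
      · rw [abs_sub_comm]
        exact lip h12 h13 h23 hcov hr
          (fun hmem => hnot (by simpa [Sym2.eq_swap] using (Sym2.eq_swap ▸ hmem : s(x,y) ∈ C.image (emap V1 V2 n))))
    have hb := walk_bound (ell V1 V2 C) hf p
    simp only [ell] at hb
    norm_num at hb
    exact_mod_cast hb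

lemma exists_unblocked {α : Type*} (S : Finset α) {n : ℕ} (hn : S.card < n)
    (E : Fin n → List α)
    (hdisj : ∀ j j' : Fin n, ∀ a, a ∈ E j → a ∈ E j' → j = j') :
    ∃ j, ∀ a ∈ E j, a ∉ S := by
  by_contra hc
  push_neg at hc
  choose f hfE hfS using hc
  have hinj : Set.InjOn f (Finset.univ : Finset (Fin n)) := fun j _ j' _ hjj' =>
    hdisj j j' (f j) (hfE j) (hjj' ▸ hfE j')
  have hcard := Finset.card_le_card_of_injOn f (fun j _ => hfS j) hinj
  simp at hcard
  omega

lemma cover13 {G : SimpleGraph V} {V1 V2 V3 : Set V} {n : ℕ}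
    (h13 : V1 ∩ V3 = ∅)
    {S : Finset (Sym2 (RV V n))} (hn : S.card < n)
    (hpaths : ∀ p : ((SimpleGraph.fromRel (rrel G V1 V2 V3 n)).deleteEdges ↑S).Walk
        RV.src RV.tgt, p.IsPath → 9 ≤ p.length)
    {a b : V} (ha : a ∈ V1) (hb : b ∈ V3) (hab : G.Adj a b) :
    s(RV.src, RV.orig a) ∈ S ∨ s(RV.orig b, RV.tgt) ∈ S := by
  by_contra hc
  push_neg at hc
  obtain ⟨hsa, hbt⟩ := hc
  have hne : a ≠ b := fun hh => (Set.eq_empty_iff_forall_notMem.1 h13 a) ⟨ha, hh ▸ hb⟩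
  have hdisj : ∀ j j' : Fin n, ∀ x,
      x ∈ (fun j => [s(RV.orig a, RV.gc a b j 0), s(RV.gc a b j 0, RV.gc a b j 1),
        s(RV.gc a b j 1, RV.gc a b j 2), s(RV.gc a b j 2, RV.gc a b j 3),
        s(RV.gc a b j 3, RV.orig b)]) j →
      x ∈ (fun j => [s(RV.orig a, RV.gc a b j 0), s(RV.gc a b j 0, RV.gc a b j 1),
        s(RV.gc a b j 1, RV.gc a b j 2), s(RV.gc a b j 2, RV.gc a b j 3),
        s(RV.gc a b j 3, RV.orig b)]) j' → j = j' := by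
    intro j j' x hx hx'
    simp only [List.mem_cons, List.not_mem_nil, or_false] at hx hx'
    rcases hx with rfl | rfl | rfl | rfl | rfl <;>
      simp [Sym2.eq_iff] at hx' <;> tauto
  obtain ⟨j, hj⟩ := exists_unblocked S hn _ hdisj
  · set G' := (SimpleGraph.fromRel (rrel G V1 V2 V3 n)).deleteEdges ↑S with hG'
    have mkadj : ∀ x y : RV V n, x ≠ y → (rrel G V1 V2 V3 n x y ∨ rrel G V1 V2 V3 n y x) →
        s(x, y) ∉ S → G'.Adj x y := by
      intro x y hxy hr hs
      rw [hG', SimpleGraph.deleteEdges_adj, SimpleGraph.fromRel_adj]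
      exact ⟨⟨hxy, hr⟩, by simpa using hs⟩
    have a1 : G'.Adj RV.src (RV.orig a) := mkadj _ _ (by simp) (Or.inl ha) hsa
    have a2 : G'.Adj (RV.orig a) (RV.gc a b j 0) :=
      mkadj _ _ (by simp) (Or.inr ⟨hab, ha, hb, Or.inl ⟨rfl, rfl⟩⟩) (hj _ (by simp))
    have a3 : G'.Adj (RV.gc a b j 0) (RV.gc a b j 1) :=
      mkadj _ _ (by simp) (Or.inl ⟨rfl, rfl, rfl, hab, ha, hb, rfl⟩) (hj _ (by simp))
    have a4 : G'.Adj (RV.gc a b j 1) (RV.gc a b j 2) :=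
      mkadj _ _ (by simp) (Or.inl ⟨rfl, rfl, rfl, hab, ha, hb, rfl⟩) (hj _ (by simp))
    have a5 : G'.Adj (RV.gc a b j 2) (RV.gc a b j 3) :=
      mkadj _ _ (by simp) (Or.inl ⟨rfl, rfl, rfl, hab, ha, hb, rfl⟩) (hj _ (by simp))
    have a6 : G'.Adj (RV.gc a b j 3) (RV.orig b) :=
      mkadj _ _ (by simp) (Or.inl ⟨hab, ha, hb, Or.inr ⟨rfl, rfl⟩⟩) (hj _ (by simp))
    have a7 : G'.Adj (RV.orig b) RV.tgt := mkadj _ _ (by simp) (Or.inl hb) hbt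
    have hge := hpaths
      (.cons a1 (.cons a2 (.cons a3 (.cons a4 (.cons a5 (.cons a6 (.cons a7 .nil)))))))
      (by simp [SimpleGraph.Walk.isPath_def, hne])
    simp [SimpleGraph.Walk.length_cons] at hge

lemma cover12 {G : SimpleGraph V} {V1 V2 V3 : Set V} {n : ℕ}
    (h12 : V1 ∩ V2 = ∅)
    {S : Finset (Sym2 (RV V n))} (hn : S.card < n)
    (hpaths : ∀ p : ((SimpleGraph.fromRel (rrel G V1 V2 V3 n)).deleteEdges ↑S).Walk
        RV.src RV.tgt, p.IsPath → 9 ≤ p.length)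
    {a b : V} (ha : a ∈ V1) (hb : b ∈ V2) (hab : G.Adj a b) :
    s(RV.src, RV.orig a) ∈ S ∨ s(RV.orig b, RV.copy b) ∈ S := by
  by_contra hc
  push_neg at hc
  obtain ⟨hsa, hbc⟩ := hc
  have hne : a ≠ b := fun hh => (Set.eq_empty_iff_forall_notMem.1 h12 a) ⟨ha, hh ▸ hb⟩
  have hdisj1 : ∀ j j' : Fin n, ∀ x,
      x ∈ (fun j => [s(RV.orig a, RV.ga a b j), s(RV.ga a b j, RV.orig b)]) j →
      x ∈ (fun j => [s(RV.orig a, RV.ga a b j), s(RV.ga a b j, RV.orig b)]) j' →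
      j = j' := by
    intro j j' x hx hx'
    simp only [List.mem_cons, List.not_mem_nil, or_false] at hx hx'
    rcases hx with rfl | rfl <;> simp [Sym2.eq_iff] at hx' <;> tauto
  obtain ⟨j, hj⟩ := exists_unblocked S hn _ hdisj1
  have hdisj2 : ∀ k k' : Fin n, ∀ x,
      x ∈ (fun k => [s(RV.tgt, RV.ge b k 0), s(RV.ge b k 0, RV.ge b k 1),
        s(RV.ge b k 1, RV.ge b k 2), s(RV.ge b k 2, RV.copy b)]) k →
      x ∈ (fun k => [s(RV.tgt, RV.ge b k 0), s(RV.ge b k 0, RV.ge b k 1),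
        s(RV.ge b k 1, RV.ge b k 2), s(RV.ge b k 2, RV.copy b)]) k' → k = k' := by
    intro k k' x hx hx'
    simp only [List.mem_cons, List.not_mem_nil, or_false] at hx hx'
    rcases hx with rfl | rfl | rfl | rfl <;> simp [Sym2.eq_iff] at hx' <;> tauto
  obtain ⟨k, hk⟩ := exists_unblocked S hn _ hdisj2
  set G' := (SimpleGraph.fromRel (rrel G V1 V2 V3 n)).deleteEdges ↑S with hG'
  have mkadj : ∀ x y : RV V n, x ≠ y → (rrel G V1 V2 V3 n x y ∨ rrel G V1 V2 V3 n y x) →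
      s(x, y) ∉ S → G'.Adj x y := by
    intro x y hxy hr hs
    rw [hG', SimpleGraph.deleteEdges_adj, SimpleGraph.fromRel_adj]
    exact ⟨⟨hxy, hr⟩, by simpa using hs⟩
  have a1 : G'.Adj RV.src (RV.orig a) := mkadj _ _ (by simp) (Or.inl ha) hsa
  have a2 : G'.Adj (RV.orig a) (RV.ga a b j) :=
    mkadj _ _ (by simp) (Or.inr ⟨hab, ha, hb, Or.inl rfl⟩) (hj _ (by simp))
  have a3 : G'.Adj (RV.ga a b j) (RV.orig b) :=
    mkadj _ _ (by simp) (Or.inl ⟨hab, ha, hb, Or.inr rfl⟩) (hj _ (by simp))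
  have a4 : G'.Adj (RV.orig b) (RV.copy b) := mkadj _ _ (by simp) (Or.inl ⟨rfl, hb⟩) hbc
  have a5 : G'.Adj (RV.copy b) (RV.ge b k 2) :=
    mkadj _ _ (by simp) (Or.inr ⟨hb, rfl, by decide⟩)
      (by rw [Sym2.eq_swap]; exact hk _ (by simp))
  have a6 : G'.Adj (RV.ge b k 2) (RV.ge b k 1) :=
    mkadj _ _ (by simp) (Or.inr ⟨rfl, rfl, hb, by decide⟩)
      (by rw [Sym2.eq_swap]; exact hk _ (by simp))
  have a7 : G'.Adj (RV.ge b k 1) (RV.ge b k 0) :=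
    mkadj _ _ (by simp) (Or.inr ⟨rfl, rfl, hb, by decide⟩)
      (by rw [Sym2.eq_swap]; exact hk _ (by simp))
  have a8 : G'.Adj (RV.ge b k 0) RV.tgt :=
    mkadj _ _ (by simp) (Or.inr ⟨hb, by decide⟩)
      (by rw [Sym2.eq_swap]; exact hk _ (by simp))
  have hge := hpaths
    (.cons a1 (.cons a2 (.cons a3 (.cons a4 (.cons a5 (.cons a6 (.cons a7 (.cons a8 .nil))))))))
    (by simp [SimpleGraph.Walk.isPath_def, hne])
  simp [SimpleGraph.Walk.length_cons] at hge

lemma cover23 {G : SimpleGraph V} {V1 V2 V3 : Set V} {n : ℕ}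
    (h23 : V2 ∩ V3 = ∅)
    {S : Finset (Sym2 (RV V n))} (hn : S.card < n)
    (hpaths : ∀ p : ((SimpleGraph.fromRel (rrel G V1 V2 V3 n)).deleteEdges ↑S).Walk
        RV.src RV.tgt, p.IsPath → 9 ≤ p.length)
    {a b : V} (ha : a ∈ V2) (hb : b ∈ V3) (hab : G.Adj a b) :
    s(RV.orig a, RV.copy a) ∈ S ∨ s(RV.orig b, RV.tgt) ∈ S := by
  by_contra hc
  push_neg at hc
  obtain ⟨hsa, hbt⟩ := hc
  have hne : a ≠ b := fun hh => (Set.eq_empty_iff_forall_notMem.1 h23 a) ⟨ha, hh ▸ hb⟩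
  have hdisj1 : ∀ j j' : Fin n, ∀ x,
      x ∈ (fun j => [s(RV.src, RV.gd a j 0), s(RV.gd a j 0, RV.gd a j 1),
        s(RV.gd a j 1, RV.gd a j 2), s(RV.gd a j 2, RV.orig a)]) j →
      x ∈ (fun j => [s(RV.src, RV.gd a j 0), s(RV.gd a j 0, RV.gd a j 1),
        s(RV.gd a j 1, RV.gd a j 2), s(RV.gd a j 2, RV.orig a)]) j' → j = j' := by
    intro j j' x hx hx'
    simp only [List.mem_cons, List.not_mem_nil, or_false] at hx hx'
    rcases hx with rfl | rfl | rfl | rfl <;> simp [Sym2.eq_iff] at hx' <;> tauto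
  obtain ⟨j, hj⟩ := exists_unblocked S hn _ hdisj1
  have hdisj2 : ∀ k k' : Fin n, ∀ x,
      x ∈ (fun k => [s(RV.copy a, RV.gb a b k), s(RV.gb a b k, RV.orig b)]) k →
      x ∈ (fun k => [s(RV.copy a, RV.gb a b k), s(RV.gb a b k, RV.orig b)]) k' →
      k = k' := by
    intro k k' x hx hx'
    simp only [List.mem_cons, List.not_mem_nil, or_false] at hx hx'
    rcases hx with rfl | rfl <;> simp [Sym2.eq_iff] at hx' <;> tauto
  obtain ⟨k, hk⟩ := exists_unblocked S hn _ hdisj2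
  set G' := (SimpleGraph.fromRel (rrel G V1 V2 V3 n)).deleteEdges ↑S with hG'
  have mkadj : ∀ x y : RV V n, x ≠ y → (rrel G V1 V2 V3 n x y ∨ rrel G V1 V2 V3 n y x) →
      s(x, y) ∉ S → G'.Adj x y := by
    intro x y hxy hr hs
    rw [hG', SimpleGraph.deleteEdges_adj, SimpleGraph.fromRel_adj]
    exact ⟨⟨hxy, hr⟩, by simpa using hs⟩
  have a1 : G'.Adj RV.src (RV.gd a j 0) :=
    mkadj _ _ (by simp) (Or.inl ⟨ha, by decide⟩) (hj _ (by simp))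
  have a2 : G'.Adj (RV.gd a j 0) (RV.gd a j 1) :=
    mkadj _ _ (by simp) (Or.inl ⟨rfl, rfl, ha, by decide⟩) (hj _ (by simp))
  have a3 : G'.Adj (RV.gd a j 1) (RV.gd a j 2) :=
    mkadj _ _ (by simp) (Or.inl ⟨rfl, rfl, ha, by decide⟩) (hj _ (by simp))
  have a4 : G'.Adj (RV.gd a j 2) (RV.orig a) :=
    mkadj _ _ (by simp) (Or.inl ⟨ha, rfl, by decide⟩) (hj _ (by simp))
  have a5 : G'.Adj (RV.orig a) (RV.copy a) := mkadj _ _ (by simp) (Or.inl ⟨rfl, ha⟩) hsa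
  have a6 : G'.Adj (RV.copy a) (RV.gb a b k) :=
    mkadj _ _ (by simp) (Or.inr ⟨hab, ha, hb, rfl⟩)
      (by rw [Sym2.eq_swap]; exact hk _ (by simp))
  have a7 : G'.Adj (RV.gb a b k) (RV.orig b) :=
    mkadj _ _ (by simp) (Or.inl ⟨hab, ha, hb, rfl⟩) (hk _ (by simp))
  have a8 : G'.Adj (RV.orig b) RV.tgt := mkadj _ _ (by simp) (Or.inl hb) hbt
  have hge := hpaths
    (.cons a1 (.cons a2 (.cons a3 (.cons a4 (.cons a5 (.cons a6 (.cons a7 (.cons a8 .nil))))))))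
    (by simp [SimpleGraph.Walk.isPath_def, hne])
  simp [SimpleGraph.Walk.length_cons] at hge

lemma emap_inj {V1 V2 : Set V} {n : ℕ} :
    ∀ v w : V, emap V1 V2 n v = emap V1 V2 n w → v = w := by
  intro v w hvw
  unfold emap at hvw
  split_ifs at hvw <;> simp [Sym2.eq_iff] at hvw <;> tauto

end Red16

/-- **Correctness of the reduction from Vertex Cover on tripartite graphs.**
Let `G = (V₁ ⊎ V₂ ⊎ V₃, E)` be a tripartite graph on `n` vertices, `h ∈ ℕ`,
and let `G'` be the unit-length graph constructed by the gadget reduction.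
Then `G` has a vertex cover of size at most `h` iff there is an edge set
`S ⊆ E(G')` with `|S| ≤ h` such that every `st`-path in `G' − S` has at
least `9` edges. -/


theorem stmt16 {V : Type*} [Fintype V] [DecidableEq V] (G : SimpleGraph V)
    (V1 V2 V3 : Set V)
    (hcover : V1 ∪ V2 ∪ V3 = Set.univ)
    (h12 : V1 ∩ V2 = ∅) (h13 : V1 ∩ V3 = ∅) (h23 : V2 ∩ V3 = ∅)
    (htri1 : ∀ a ∈ V1, ∀ b ∈ V1, ¬ G.Adj a b)
    (htri2 : ∀ a ∈ V2, ∀ b ∈ V2, ¬ G.Adj a b)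
    (htri3 : ∀ a ∈ V3, ∀ b ∈ V3, ¬ G.Adj a b)
    (h : ℕ) :
    (∃ C : Finset V, C.card ≤ h ∧ ∀ a b : V, G.Adj a b → a ∈ C ∨ b ∈ C) ↔
    (∃ S : Finset (Sym2 (RV V (Fintype.card V))),
        ↑S ⊆ (SimpleGraph.fromRel (rrel G V1 V2 V3 (Fintype.card V))).edgeSet ∧
        S.card ≤ h ∧
        ∀ p : ((SimpleGraph.fromRel
            (rrel G V1 V2 V3 (Fintype.card V))).deleteEdges ↑S).Walk
            RV.src RV.tgt, p.IsPath → 9 ≤ p.length) := by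
  classical
  have e12 : ∀ v, v ∈ V1 → v ∈ V2 → False := fun v a b =>
    (Set.eq_empty_iff_forall_notMem.1 h12 v) ⟨a, b⟩
  have e13 : ∀ v, v ∈ V1 → v ∈ V3 → False := fun v a b =>
    (Set.eq_empty_iff_forall_notMem.1 h13 v) ⟨a, b⟩
  have e23 : ∀ v, v ∈ V2 → v ∈ V3 → False := fun v a b =>
    (Set.eq_empty_iff_forall_notMem.1 h23 v) ⟨a, b⟩
  constructor
  · rintro ⟨C, hC, hcov⟩
    obtain ⟨hsub, hcard, hpaths⟩ :=
      Red16.forward (n := Fintype.card V) hcover h12 h13 h23 hcov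
    exact ⟨C.image (Red16.emap V1 V2 (Fintype.card V)), hsub,
      le_trans hcard hC, hpaths⟩
  · rintro ⟨S, hsub, hcard, hpaths⟩
    by_cases hbig : Fintype.card V ≤ h
    · exact ⟨Finset.univ, by simpa using hbig, fun a b _ => Or.inl (Finset.mem_univ a)⟩
    · push_neg at hbig
      have hn' : S.card < Fintype.card V := lt_of_le_of_lt hcard hbig
      set C : Finset V :=
        Finset.univ.filter (fun v => Red16.emap V1 V2 (Fintype.card V) v ∈ S) with hC
      have memC : ∀ v : V, v ∈ C ↔ Red16.emap V1 V2 (Fintype.card V) v ∈ S := by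
        intro v; simp [hC]
      have emv1 : ∀ v ∈ V1, Red16.emap V1 V2 (Fintype.card V) v
          = s(RV.src, RV.orig v) := by
        intro v hv; simp [Red16.emap, hv]
      have emv2 : ∀ v ∈ V2, Red16.emap V1 V2 (Fintype.card V) v
          = s(RV.orig v, RV.copy v) := by
        intro v hv
        have hv1 : v ∉ V1 := fun hh => e12 v hh hv
        simp [Red16.emap, hv, hv1]
      have emv3 : ∀ v ∈ V3, Red16.emap V1 V2 (Fintype.card V) v
          = s(RV.orig v, RV.tgt) := by
        intro v hv
        have hv1 : v ∉ V1 := fun hh => e13 v hh hv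
        have hv2 : v ∉ V2 := fun hh => e23 v hh hv
        simp [Red16.emap, hv1, hv2]
      refine ⟨C, ?_, ?_⟩
      · have hle : C.card ≤ S.card := by
          apply Finset.card_le_card_of_injOn (Red16.emap V1 V2 (Fintype.card V))
          · intro v hv; exact (memC v).1 hv
          · intro v _ w _ hvw; exact Red16.emap_inj v w hvw
        omega
      · intro a b hab
        have haP : a ∈ V1 ∪ V2 ∪ V3 := by rw [hcover]; trivial
        have hbP : b ∈ V1 ∪ V2 ∪ V3 := by rw [hcover]; trivial
        rcases haP with (ha1 | ha2) | ha3 <;> rcases hbP with (hb1 | hb2) | hb3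
        · exact absurd hab (htri1 a ha1 b hb1)
        · rcases Red16.cover12 h12 hn' hpaths ha1 hb2 hab with hcase | hcase
          · exact Or.inl ((memC a).2 (by rw [emv1 a ha1]; exact hcase))
          · exact Or.inr ((memC b).2 (by rw [emv2 b hb2]; exact hcase))
        · rcases Red16.cover13 h13 hn' hpaths ha1 hb3 hab with hcase | hcase
          · exact Or.inl ((memC a).2 (by rw [emv1 a ha1]; exact hcase))
          · exact Or.inr ((memC b).2 (by rw [emv3 b hb3]; exact hcase))
        · rcases Red16.cover12 h12 hn' hpaths hb1 ha2 hab.symm with hcase | hcase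
          · exact Or.inr ((memC b).2 (by rw [emv1 b hb1]; exact hcase))
          · exact Or.inl ((memC a).2 (by rw [emv2 a ha2]; exact hcase))
        · exact absurd hab (htri2 a ha2 b hb2)
        · rcases Red16.cover23 h23 hn' hpaths ha2 hb3 hab with hcase | hcase
          · exact Or.inl ((memC a).2 (by rw [emv2 a ha2]; exact hcase))
          · exact Or.inr ((memC b).2 (by rw [emv3 b hb3]; exact hcase))
        · rcases Red16.cover13 h13 hn' hpaths hb1 ha3 hab.symm with hcase | hcase
          · exact Or.inr ((memC b).2 (by rw [emv1 b hb1]; exact hcase))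
          · exact Or.inl ((memC a).2 (by rw [emv3 a ha3]; exact hcase))
        · rcases Red16.cover23 h23 hn' hpaths hb2 ha3 hab.symm with hcase | hcase
          · exact Or.inr ((memC b).2 (by rw [emv2 b hb2]; exact hcase))
          · exact Or.inl ((memC a).2 (by rw [emv3 a ha3]; exact hcase))
        · exact absurd hab (htri3 a ha3 b hb3)
end
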